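/- arXiv:2111.12347 — 8 statements merged into one kernel-verified Lean document; each statement's English description precedes it below -/
import Mathlib

section
/- Let n ≥ 2, let μ be a finite Borel measure on ℝⁿ and let σ : ℝⁿ → ℝⁿ be Borel measurable with |σ(x)| = 1 for μ-almost every x. Then the affine energy E(μ,σ) equals 0 if and only if there exists ξ̃ in the unit sphere S^{n−1} such that ∫_{ℝⁿ} |σ(x)·ξ̃| dμ(x) = 0. -/
open MeasureTheory ENNReal

noncomputable section

/-- ω_k: the volume of the unit ball in ℝ^k. -/
def unitBallVol (k : ℕ) : ℝ :=
  (volume (Metric.ball (0 : EuclideanSpace ℝ (Fin k)) 1)).toReal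

/-- The constant α_n = (2 ω_{n-1})⁻¹ (n ω_n)^{1 + 1/n}. -/
def alphaConst (n : ℕ) : ℝ :=
  (2 * unitBallVol (n - 1))⁻¹ * (n * unitBallVol n) ^ (1 + 1 / (n : ℝ))

/-- The (n-1)-dimensional Hausdorff (surface) measure on the unit sphere S^{n-1} ⊂ ℝⁿ. -/
def sphereMeasure (n : ℕ) : Measure (EuclideanSpace ℝ (Fin n)) :=
  (μH[(n : ℝ) - 1]).restrict (Metric.sphere (0 : EuclideanSpace ℝ (Fin n)) 1)

/-- Ψ_ξ(μ, σ) = ∫ |σ(x)·ξ| dμ(x). -/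
def PsiM {n : ℕ} (μ : Measure (EuclideanSpace ℝ (Fin n)))
    (σ : EuclideanSpace ℝ (Fin n) → EuclideanSpace ℝ (Fin n))
    (ξ : EuclideanSpace ℝ (Fin n)) : ℝ≥0∞ :=
  ∫⁻ x, ENNReal.ofReal |(inner ℝ (σ x) ξ : ℝ)| ∂μ

/-- The affine energy E(μ, σ) = α_n (∫_{S^{n-1}} Ψ_ξ(μ,σ)^{-n} dξ)^{-1/n}, computed in the
extended nonnegative reals (so that 0^{-n} = ∞ and ∞^{-1/n} = 0, matching the conventions). -/
def energyM {n : ℕ} (μ : Measure (EuclideanSpace ℝ (Fin n)))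
    (σ : EuclideanSpace ℝ (Fin n) → EuclideanSpace ℝ (Fin n)) : ℝ≥0∞ :=
  ENNReal.ofReal (alphaConst n) *
    (∫⁻ ξ, (PsiM μ σ ξ) ^ (-(n : ℝ)) ∂(sphereMeasure n)) ^ (-(1 / (n : ℝ)))

/-!
Since `‖σ‖ ≤ 1` almost everywhere, `ξ ↦ Ψ_ξ` is `μ(ℝⁿ)`-Lipschitz, and `E(μ,σ) = 0` exactly when
`∫ Ψ_ξ^{-n} dξ = ∞`. If `Ψ` does not vanish on the sphere, compactness bounds it below there, and
the integral is finite because `𝓗^{n-1}(S^{n-1}) < ∞`: finitely many caps cover the sphere, and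
each is a Lipschitz image of a ball in a tangent hyperplane under central projection. If
`Ψ_{ξ₀} = 0`, then `Ψ ≤ μ(ℝⁿ) r` on the cap of radius `r` around `ξ₀`, which projects
orthogonally onto an `(n-1)`-ball of radius `r / 2` in `ξ₀ᗮ`; so that cap alone contributes at
least `c r^{n-1} (μ(ℝⁿ) r)^{-n} = c' / r` to the integral, for every small `r`.
-/

open Metric Filter Topology Module
open scoped NNReal RealInnerProductSpace

theorem ENNReal.rpow_le_rpow_of_nonpos {x y : ℝ≥0∞} {z : ℝ} (hz : z ≤ 0) (h : x ≤ y) :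
    y ^ z ≤ x ^ z := by
  rw [← neg_neg z, ENNReal.rpow_neg y, ENNReal.rpow_neg x]
  exact ENNReal.inv_le_inv.2 (ENNReal.rpow_le_rpow h (neg_nonneg.2 hz))

theorem ENNReal.eq_zero_of_forall_le_mul_ofReal_rpow {c K : ℝ≥0∞} (hK : K ≠ ⊤) {q : ℝ}
    (hq : 0 < q) (h : ∀ r : ℝ, 0 < r → r ≤ 1 → c ≤ K * ENNReal.ofReal r ^ q) : c = 0 := by
  have hlim : Tendsto (fun r : ℝ => K * ENNReal.ofReal r ^ q) (𝓝[>] 0) (𝓝 0) := by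
    have hpow : Tendsto (fun r : ℝ => ENNReal.ofReal r ^ q) (𝓝[>] 0) (𝓝 0) := by
      rw [← ENNReal.zero_rpow_of_pos hq, ← ENNReal.ofReal_zero]
      exact ((ENNReal.continuous_rpow_const.comp ENNReal.continuous_ofReal).tendsto 0).mono_left
        nhdsWithin_le_nhds
    simpa using ENNReal.Tendsto.const_mul hpow (Or.inr hK)
  refine le_antisymm (ge_of_tendsto hlim ?_) bot_le
  filter_upwards [Ioc_mem_nhdsGT zero_lt_one] with r hr using h r hr.1 hr.2

section NegativePowerIntegrals

variable {X : Type*} [MeasurableSpace X] {ν : Measure X} {f : X → ℝ≥0∞}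

theorem setLIntegral_rpow_neg_lt_top [TopologicalSpace X] {K : Set X} (hK : IsCompact K)
    (hKm : MeasurableSet K) (hνK : ν K ≠ ⊤) (hf : ContinuousOn f K) (hf0 : ∀ x ∈ K, f x ≠ 0)
    {p : ℝ} (hp : 0 ≤ p) : ∫⁻ x in K, f x ^ (-p) ∂ν < ⊤ := by
  rcases K.eq_empty_or_nonempty with rfl | hne
  · simp
  obtain ⟨x₀, hx₀, hmin⟩ := hK.exists_isMinOn hne hf
  have hfin : f x₀ ^ (-p) ≠ ⊤ := by
    simp [ENNReal.rpow_eq_top_iff, hf0 x₀ hx₀, hp]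
  calc ∫⁻ x in K, f x ^ (-p) ∂ν ≤ ∫⁻ _ in K, f x₀ ^ (-p) ∂ν :=
        setLIntegral_mono' hKm fun x hx =>
          ENNReal.rpow_le_rpow_of_nonpos (neg_nonpos.2 hp) (hmin hx)
    _ = f x₀ ^ (-p) * ν K := setLIntegral_const _ _
    _ < ⊤ := ENNReal.mul_lt_top hfin.lt_top hνK.lt_top

theorem lintegral_rpow_neg_eq_top [PseudoMetricSpace X] [OpensMeasurableSpace X] (x₀ : X)
    {C c : ℝ≥0∞} (hC : C ≠ ⊤) (hc : c ≠ 0) {d p : ℝ} (hp : 0 ≤ p) (hdp : d < p)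
    (hf : ∀ x, f x ≤ C * edist x x₀)
    (hν : ∀ r : ℝ, 0 < r → r ≤ 1 → c * ENNReal.ofReal r ^ d ≤ ν (closedBall x₀ r)) :
    ∫⁻ x, f x ^ (-p) ∂ν = ⊤ := by
  set I := ∫⁻ x, f x ^ (-p) ∂ν
  by_contra hI
  refine hc (ENNReal.eq_zero_of_forall_le_mul_ofReal_rpow
    (ENNReal.mul_ne_top hI (ENNReal.rpow_ne_top_of_nonneg hp hC)) (sub_pos.2 hdp)
    fun r hr0 hr1 => ?_)
  set ρ := ENNReal.ofReal r
  have hρ0 : ρ ≠ 0 := by simpa [ρ] using hr0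
  have hball : (C * ρ) ^ (-p) * (c * ρ ^ d) ≤ I :=
    calc (C * ρ) ^ (-p) * (c * ρ ^ d) ≤ (C * ρ) ^ (-p) * ν (closedBall x₀ r) := by
          gcongr; exact hν r hr0 hr1
      _ = ∫⁻ _ in closedBall x₀ r, (C * ρ) ^ (-p) ∂ν := (setLIntegral_const _ _).symm
      _ ≤ ∫⁻ x in closedBall x₀ r, f x ^ (-p) ∂ν :=
          setLIntegral_mono' measurableSet_closedBall fun x hx =>
            ENNReal.rpow_le_rpow_of_nonpos (neg_nonpos.2 hp)
              ((hf x).trans (by gcongr; exact (edist_le_ofReal hr0.le).2 hx))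
      _ ≤ I := setLIntegral_le_lintegral _ _
  have hsplit : (C * ρ) ^ p = C ^ p * ρ ^ (p - d) * ρ ^ d := by
    rw [ENNReal.mul_rpow_of_nonneg _ _ hp, mul_assoc,
      ← ENNReal.rpow_add _ _ hρ0 ENNReal.ofReal_ne_top, sub_add_cancel]
  rw [ENNReal.rpow_neg, ← ENNReal.div_eq_inv_mul, ENNReal.div_le_iff_le_mul (Or.inr hI)
    (Or.inl (ENNReal.rpow_ne_top_of_nonneg hp (ENNReal.mul_ne_top hC ENNReal.ofReal_ne_top))),
    hsplit, ← mul_assoc, ← mul_assoc] at hball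
  exact (ENNReal.mul_le_mul_iff_left
    (ENNReal.rpow_pos (pos_iff_ne_zero.2 hρ0) ENNReal.ofReal_ne_top).ne'
    (ENNReal.rpow_ne_top_of_ne_zero hρ0 ENNReal.ofReal_ne_top)).1 hball

end NegativePowerIntegrals

theorem norm_inv_norm_smul_sub_inv_norm_smul_le {F : Type*} [NormedAddCommGroup F]
    [NormedSpace ℝ F] {x : F} (hx : x ≠ 0) (y : F) :
    ‖‖x‖⁻¹ • x - ‖y‖⁻¹ • y‖ ≤ 2 * ‖x - y‖ / ‖x‖ := by
  have hx' : 0 < ‖x‖ := norm_pos_iff.2 hx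
  have hy : |‖x‖⁻¹ - ‖y‖⁻¹| * ‖y‖ ≤ ‖x - y‖ / ‖x‖ := by
    rcases eq_or_ne y 0 with rfl | hy
    · simp; positivity
    have hy' : 0 < ‖y‖ := norm_pos_iff.2 hy
    have h : (‖x‖⁻¹ - ‖y‖⁻¹) * ‖y‖ = (‖y‖ - ‖x‖) / ‖x‖ := by field_simp
    calc |‖x‖⁻¹ - ‖y‖⁻¹| * ‖y‖ = |‖y‖ - ‖x‖| / ‖x‖ := by
          rw [← abs_norm y, ← abs_mul, abs_norm, h, abs_div, abs_norm]
      _ ≤ ‖x - y‖ / ‖x‖ := by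
          gcongr; rw [norm_sub_rev]; exact abs_norm_sub_norm_le y x
  calc ‖‖x‖⁻¹ • x - ‖y‖⁻¹ • y‖ = ‖‖x‖⁻¹ • (x - y) + (‖x‖⁻¹ - ‖y‖⁻¹) • y‖ := by
        congr 1; module
    _ ≤ ‖x‖⁻¹ * ‖x - y‖ + |‖x‖⁻¹ - ‖y‖⁻¹| * ‖y‖ := by
        refine (norm_add_le _ _).trans_eq ?_
        rw [norm_smul, norm_smul, Real.norm_eq_abs, Real.norm_eq_abs, abs_inv, abs_norm]
    _ ≤ ‖x - y‖ / ‖x‖ + ‖x - y‖ / ‖x‖ := by rw [inv_mul_eq_div]; gcongr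
    _ = 2 * ‖x - y‖ / ‖x‖ := by ring

section UnitSphere

variable {E : Type*} [NormedAddCommGroup E] [InnerProductSpace ℝ E]

def gnomonicChart (u : E) (v : (ℝ ∙ u)ᗮ) : E :=
  ‖u + v‖⁻¹ • (u + v)

theorem one_le_norm_add_of_mem_orthogonal {u v : E} (hu : ‖u‖ = 1) (hv : v ∈ (ℝ ∙ u)ᗮ) :
    1 ≤ ‖u + v‖ := by
  have h := norm_add_sq_eq_norm_sq_add_norm_sq_of_inner_eq_zero u v
    (Submodule.mem_orthogonal_singleton_iff_inner_right.1 hv)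
  rw [hu] at h
  nlinarith [norm_nonneg (u + v), norm_nonneg v]

theorem lipschitzWith_gnomonicChart {u : E} (hu : ‖u‖ = 1) : LipschitzWith 2 (gnomonicChart u) := by
  refine LipschitzWith.of_dist_le_mul fun v w => ?_
  have h1 := one_le_norm_add_of_mem_orthogonal hu v.2
  rw [dist_eq_norm, dist_eq_norm]
  calc ‖gnomonicChart u v - gnomonicChart u w‖ ≤ 2 * ‖(u + v) - (u + w)‖ / ‖u + v‖ :=
        norm_inv_norm_smul_sub_inv_norm_smul_le (norm_pos_iff.1 (zero_lt_one.trans_le h1)) _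
    _ ≤ 2 * ‖(u + v) - (u + w)‖ := div_le_self (by positivity) h1
    _ = 2 * ‖v - w‖ := by rw [add_sub_add_left_eq_sub]; rfl

theorem mem_gnomonicChart_image_closedBall {u ξ : E} (hu : ‖u‖ = 1) (hξ : ‖ξ‖ = 1)
    (huξ : 1 / 2 < ⟪u, ξ⟫) : ξ ∈ gnomonicChart u '' closedBall 0 3 := by
  set a := ⟪u, ξ⟫
  have ha : 0 < a := by linarith
  have hv : a⁻¹ • ξ - u ∈ (ℝ ∙ u)ᗮ := by
    rw [Submodule.mem_orthogonal_singleton_iff_inner_right, inner_sub_right,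
      real_inner_smul_right, real_inner_self_eq_norm_sq, hu, inv_mul_cancel₀ ha.ne']
    norm_num
  refine ⟨⟨_, hv⟩, ?_, ?_⟩
  · rw [mem_closedBall_zero_iff]
    calc ‖a⁻¹ • ξ - u‖ ≤ ‖a⁻¹ • ξ‖ + ‖u‖ := norm_sub_le _ _
      _ ≤ 3 := by
          rw [norm_smul, hξ, hu, Real.norm_eq_abs, abs_of_pos (inv_pos.2 ha)]
          have : a⁻¹ < 2 := by rw [inv_lt_comm₀ ha two_pos]; linarith
          linarith
  · simp [gnomonicChart, norm_smul, hξ, abs_of_pos ha, smul_smul, ha.ne']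

theorem closedBall_subset_orthogonalProjectionOnto_image {ξ : E} (hξ : ‖ξ‖ = 1) {r : ℝ}
    (hr : r ≤ 1) :
    closedBall (0 : (ℝ ∙ ξ)ᗮ) (r / 2) ⊆
      (ℝ ∙ ξ)ᗮ.orthogonalProjectionOnto '' (closedBall ξ r ∩ sphere 0 1) := by
  intro v hv
  rw [mem_closedBall_zero_iff] at hv
  have hpyth : ∀ s : ℝ, ‖(v : E) + s • ξ‖ ^ 2 = ‖v‖ ^ 2 + s ^ 2 := fun s => by
    have hvξ : ⟪(v : E), s • ξ⟫ = 0 := by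
      rw [real_inner_smul_right, real_inner_comm,
        Submodule.mem_orthogonal_singleton_iff_inner_right.1 v.2, mul_zero]
    rw [sq, sq, sq, norm_add_sq_eq_norm_sq_add_norm_sq_of_inner_eq_zero _ _ hvξ, norm_smul, hξ,
      Real.norm_eq_abs, mul_one, abs_mul_abs_self]
    rfl
  have hv1 : ‖v‖ ^ 2 ≤ 1 := by nlinarith [norm_nonneg v]
  set t := √(1 - ‖v‖ ^ 2)
  have ht2 : t ^ 2 = 1 - ‖v‖ ^ 2 := Real.sq_sqrt (by linarith)
  have ht0 : 0 ≤ t := Real.sqrt_nonneg _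
  have ht1 : t ≤ 1 := by nlinarith
  refine ⟨v + t • ξ, ⟨?_, ?_⟩, ?_⟩
  · rw [mem_closedBall, dist_eq_norm, show (v : E) + t • ξ - ξ = v + (t - 1) • ξ by module]
    have := hpyth (t - 1)
    nlinarith [norm_nonneg ((v : E) + (t - 1) • ξ), norm_nonneg v]
  · rw [mem_sphere_zero_iff_norm]
    have := hpyth t
    nlinarith [norm_nonneg ((v : E) + t • ξ)]
  · have hξ' : ξ ∈ (ℝ ∙ ξ)ᗮᗮ :=
      Submodule.le_orthogonal_orthogonal _ (Submodule.mem_span_singleton_self ξ)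
    rw [map_add, map_smul, Submodule.orthogonalProjectionOnto_mem_subspace_eq_self,
      Submodule.orthogonalProjectionOnto_apply_of_mem_orthogonal hξ', smul_zero, add_zero]

variable [FiniteDimensional ℝ E] [MeasurableSpace E] [BorelSpace E] {d : ℕ}

theorem hausdorffMeasure_gnomonicChart_image_closedBall_lt_top (hE : finrank ℝ E = d + 1)
    {u : E} (hu : ‖u‖ = 1) (R : ℝ) : μH[d] (gnomonicChart u '' closedBall 0 R) < ⊤ := by
  have : Fact (finrank ℝ E = d + 1) := ⟨hE⟩
  have hK : finrank ℝ (ℝ ∙ u)ᗮ = d :=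
    Submodule.finrank_orthogonal_span_singleton (by rintro rfl; simp at hu)
  calc μH[d] (gnomonicChart u '' closedBall 0 R)
      ≤ (2 : ℝ≥0) ^ (d : ℝ) * μH[d] (closedBall (0 : (ℝ ∙ u)ᗮ) R) :=
        (lipschitzWith_gnomonicChart hu).hausdorffMeasure_image_le d.cast_nonneg _
    _ < ⊤ := by
        rw [← hK]
        exact ENNReal.mul_lt_top (ENNReal.rpow_lt_top_of_nonneg (by positivity) (by simp))
          measure_closedBall_lt_top

theorem hausdorffMeasure_sphere_lt_top (hE : finrank ℝ E = d + 1) :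
    μH[d] (sphere (0 : E) 1) < ⊤ := by
  obtain ⟨t, htS, ht, hcover⟩ := (isCompact_sphere (0 : E) 1).elim_finite_subcover_image
    (b := sphere 0 1) (c := fun u => {ξ | 1 / 2 < ⟪u, ξ⟫})
    (fun u _ => isOpen_lt continuous_const (continuous_const.inner continuous_id))
    (fun ξ hξ => Set.mem_biUnion hξ (by
      rw [mem_sphere_zero_iff_norm] at hξ
      simp [hξ]; norm_num))
  have hnorm : ∀ u ∈ t, ‖u‖ = 1 := fun u hu => by simpa using htS hu
  refine (measure_mono fun ξ hξ => ?_).trans_lt (measure_biUnion_lt_top ht fun u hu =>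
    hausdorffMeasure_gnomonicChart_image_closedBall_lt_top hE (hnorm u hu) 3)
  obtain ⟨u, hu, hξu⟩ := Set.mem_iUnion₂.1 (hcover hξ)
  exact Set.mem_biUnion hu (mem_gnomonicChart_image_closedBall (hnorm u hu) (by simpa using hξ) hξu)

theorem exists_le_hausdorffMeasure_closedBall_inter_sphere (hE : finrank ℝ E = d + 1) {ξ : E}
    (hξ : ‖ξ‖ = 1) : ∃ c ≠ 0, ∀ r : ℝ, 0 < r → r ≤ 1 →
      c * ENNReal.ofReal r ^ (d : ℝ) ≤ μH[d] (closedBall ξ r ∩ sphere 0 1) := by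
  have : Fact (finrank ℝ E = d + 1) := ⟨hE⟩
  set K := (ℝ ∙ ξ)ᗮ
  have hK : finrank ℝ K = d :=
    Submodule.finrank_orthogonal_span_singleton (by rintro rfl; simp at hξ)
  subst hK
  refine ⟨μH[finrank ℝ K] (closedBall (0 : K) (1 / 2)),
    (measure_closedBall_pos _ _ one_half_pos).ne', fun r hr0 hr1 => ?_⟩
  calc μH[finrank ℝ K] (closedBall (0 : K) (1 / 2)) * ENNReal.ofReal r ^ (finrank ℝ K : ℝ)
      = μH[finrank ℝ K] (closedBall (0 : K) (r * (1 / 2))) := by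
        rw [Measure.addHaar_closedBall_mul _ _ hr0.le (by norm_num), ENNReal.ofReal_pow hr0.le,
          ENNReal.rpow_natCast, mul_comm]
    _ ≤ μH[finrank ℝ K] (K.orthogonalProjectionOnto '' (closedBall ξ r ∩ sphere 0 1)) :=
        measure_mono <| by
          rw [mul_one_div]; exact closedBall_subset_orthogonalProjectionOnto_image hξ hr1
    _ ≤ (1 : ℝ≥0) ^ (finrank ℝ K : ℝ) * μH[finrank ℝ K] (closedBall ξ r ∩ sphere 0 1) :=
        K.lipschitzWith_orthogonalProjectionOnto.hausdorffMeasure_image_le (Nat.cast_nonneg _) _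
    _ = μH[finrank ℝ K] (closedBall ξ r ∩ sphere 0 1) := by simp

end UnitSphere

section AffineEnergy

variable {n : ℕ} {μ : Measure (EuclideanSpace ℝ (Fin n))}
  {σ : EuclideanSpace ℝ (Fin n) → EuclideanSpace ℝ (Fin n)}

theorem psiM_le_add_mul_edist (hσ : ∀ᵐ x ∂μ, ‖σ x‖ ≤ 1) (ξ η : EuclideanSpace ℝ (Fin n)) :
    PsiM μ σ ξ ≤ PsiM μ σ η + μ Set.univ * edist ξ η := by
  have hpt : ∀ᵐ x ∂μ,
      ENNReal.ofReal |⟪σ x, ξ⟫| ≤ ENNReal.ofReal |⟪σ x, η⟫| + edist ξ η := by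
    filter_upwards [hσ] with x hx
    rw [edist_dist, dist_eq_norm, ← ENNReal.ofReal_add (abs_nonneg _) (norm_nonneg _)]
    apply ENNReal.ofReal_le_ofReal
    calc |⟪σ x, ξ⟫| = |⟪σ x, η⟫ + ⟪σ x, ξ - η⟫| := by rw [inner_sub_right, add_sub_cancel]
      _ ≤ |⟪σ x, η⟫| + |⟪σ x, ξ - η⟫| := abs_add_le _ _
      _ ≤ |⟪σ x, η⟫| + ‖ξ - η‖ := by
          gcongr
          exact (abs_real_inner_le_norm _ _).trans (mul_le_of_le_one_left (norm_nonneg _) hx)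
  calc PsiM μ σ ξ ≤ ∫⁻ x, (ENNReal.ofReal |⟪σ x, η⟫| + edist ξ η) ∂μ := lintegral_mono_ae hpt
    _ = PsiM μ σ η + μ Set.univ * edist ξ η := by
        rw [lintegral_add_right _ measurable_const, lintegral_const, mul_comm]; rfl

theorem continuous_psiM [IsFiniteMeasure μ] (hσ : ∀ᵐ x ∂μ, ‖σ x‖ ≤ 1) :
    Continuous (PsiM μ σ) :=
  continuous_of_le_add_edist _ (measure_ne_top μ _) (psiM_le_add_mul_edist hσ)

theorem unitBallVol_pos (k : ℕ) : 0 < unitBallVol k :=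
  ENNReal.toReal_pos (measure_ball_pos volume _ one_pos).ne' measure_ball_lt_top.ne

theorem alphaConst_pos (hn : 0 < n) : 0 < alphaConst n := by
  have := unitBallVol_pos (n - 1)
  have := unitBallVol_pos n
  unfold alphaConst
  positivity

theorem energyM_eq_zero_iff_lintegral_eq_top (hn : 0 < n) :
    energyM μ σ = 0 ↔ ∫⁻ ξ, PsiM μ σ ξ ^ (-(n : ℝ)) ∂sphereMeasure n = ⊤ := by
  simp [energyM, ENNReal.rpow_eq_zero_iff, (alphaConst_pos hn).not_ge, hn]

theorem sphereMeasure_succ (d : ℕ) :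
    sphereMeasure (d + 1) = (μH[d]).restrict (sphere (0 : EuclideanSpace ℝ (Fin (d + 1))) 1) := by
  simp [sphereMeasure]

end AffineEnergy

theorem energyM_eq_zero_iff_general {n : ℕ} (hn : 2 ≤ n)
    (μ : Measure (EuclideanSpace ℝ (Fin n))) [IsFiniteMeasure μ]
    (σ : EuclideanSpace ℝ (Fin n) → EuclideanSpace ℝ (Fin n))
    (hσ : ∀ᵐ x ∂μ, ‖σ x‖ = 1) :
    energyM μ σ = 0 ↔
      ∃ ξ ∈ Metric.sphere (0 : EuclideanSpace ℝ (Fin n)) 1,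
        ∫⁻ x, ENNReal.ofReal |(inner ℝ (σ x) ξ : ℝ)| ∂μ = 0 := by
  obtain ⟨d, rfl⟩ : ∃ d, n = d + 1 := ⟨n - 1, by omega⟩
  have hdim : finrank ℝ (EuclideanSpace ℝ (Fin (d + 1))) = d + 1 := finrank_euclideanSpace_fin
  have hσ' : ∀ᵐ x ∂μ, ‖σ x‖ ≤ 1 := hσ.mono fun _ h => h.le
  rw [energyM_eq_zero_iff_lintegral_eq_top d.succ_pos, sphereMeasure_succ]
  constructor
  · intro htop
    by_contra! hΨ
    exact (setLIntegral_rpow_neg_lt_top (isCompact_sphere 0 1) isClosed_sphere.measurableSet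
      (hausdorffMeasure_sphere_lt_top hdim).ne (continuous_psiM hσ').continuousOn hΨ
      (Nat.cast_nonneg _)).ne htop
  · rintro ⟨ξ, hξ, hΨξ⟩
    obtain ⟨c, hc, hcap⟩ :=
      exists_le_hausdorffMeasure_closedBall_inter_sphere hdim (mem_sphere_zero_iff_norm.1 hξ)
    have hΨle : ∀ η, PsiM μ σ η ≤ μ Set.univ * edist η ξ := fun η => by
      simpa [PsiM, hΨξ] using psiM_le_add_mul_edist hσ' η ξ
    refine lintegral_rpow_neg_eq_top ξ (measure_ne_top μ _) hc (Nat.cast_nonneg _)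
      (by push_cast; linarith) hΨle fun r hr0 hr1 => ?_
    rw [Measure.restrict_apply measurableSet_closedBall]
    exact hcap r hr0 hr1

/-- the affine energy E(μ,σ) vanishes iff Ψ_ξ̃(μ,σ) = 0 for some unit vector ξ̃. -/
theorem energyM_eq_zero_iff {n : ℕ} (hn : 2 ≤ n)
    (μ : Measure (EuclideanSpace ℝ (Fin n))) [IsFiniteMeasure μ]
    (σ : EuclideanSpace ℝ (Fin n) → EuclideanSpace ℝ (Fin n)) (hσm : Measurable σ)
    (hσ : ∀ᵐ x ∂μ, ‖σ x‖ = 1) :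
    energyM μ σ = 0 ↔
      ∃ ξ ∈ Metric.sphere (0 : EuclideanSpace ℝ (Fin n)) 1,
        ∫⁻ x, ENNReal.ofReal |(inner ℝ (σ x) ξ : ℝ)| ∂μ = 0 :=
  energyM_eq_zero_iff_general hn μ σ hσ
end
end

section
/- Let n ≥ 2, let μ₁, μ₂ be finite Borel measures on ℝⁿ and let σ₁, σ₂ : ℝⁿ → ℝⁿ be Borel measurable with |σ₁(x)| = 1 for μ₁-almost every x and |σ₂(x)| = 1 for μ₂-almost every x. Define the combined energy E_c = α_n (∫_{S^{n−1}} (Ψ_ξ(μ₁,σ₁) + Ψ_ξ(μ₂,σ₂))^{−n} dξ)^{−1/n} (with the same conventions as for the affine energy). Then E_c ≥ E(μ₁,σ₁) + E(μ₂,σ₂). -/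
open MeasureTheory ENNReal

noncomputable section

/-!
Reverse Minkowski inequality for the exponent `q = -n < 0`. Let `A = (∫ f^q)^(1/q)` and
`B = (∫ g^q)^(1/q)`. When `A, B ∈ (0, ∞)`, convexity of `t ↦ t^q` on `(0, ∞)` at the points
`u (A + B) / A`, `v (A + B) / B` with weights `A / (A + B)`, `B / (A + B)` gives pointwise
`(u + v)^q ≤ (A + B)^(q - 1) (A^(1 - q) u^q + B^(1 - q) v^q)`; integrating this with `u = f`, `v = g`
yields `∫ (f + g)^q ≤ (A + B)^q`, that is `(∫ (f + g)^q)^(1/q) ≥ A + B`. When `A` or `B` is `0`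
or `∞`, monotonicity alone suffices.
-/

theorem convexOn_rpow_of_nonpos {p : ℝ} (hp : p ≤ 0) :
    ConvexOn ℝ (Set.Ioi 0) fun x : ℝ ↦ x ^ p := by
  refine ⟨convex_Ioi 0, fun x hx y hy a b ha hb hab ↦ ?_⟩
  simp only [smul_eq_mul, Set.mem_Ioi] at *
  calc (a * x + b * y) ^ p
      ≤ (x ^ a * y ^ b) ^ p :=
        Real.rpow_le_rpow_of_nonpos (by positivity)
          (Real.geom_mean_le_arith_mean2_weighted ha hb hx.le hy.le hab) hp
    _ = (x ^ p) ^ a * (y ^ p) ^ b := by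
        rw [Real.mul_rpow (by positivity) (by positivity), ← Real.rpow_mul hx.le,
          ← Real.rpow_mul hy.le, mul_comm a, mul_comm b, Real.rpow_mul hx.le, Real.rpow_mul hy.le]
    _ ≤ a * x ^ p + b * y ^ p :=
        Real.geom_mean_le_arith_mean2_weighted ha hb (by positivity) (by positivity) hab

theorem Real.add_rpow_le_of_nonpos {q a b x y : ℝ} (hq : q ≤ 0) (ha : 0 < a) (hb : 0 < b)
    (hx : 0 < x) (hy : 0 < y) :
    (x + y) ^ q ≤ (a + b) ^ (q - 1) * (a ^ (1 - q) * x ^ q + b ^ (1 - q) * y ^ q) := by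
  have hab : 0 < a + b := by positivity
  have h := (convexOn_rpow_of_nonpos hq).2 (Set.mem_Ioi.2 (by positivity : 0 < x * (a + b) / a))
    (Set.mem_Ioi.2 (by positivity : 0 < y * (a + b) / b)) (div_pos ha hab).le (div_pos hb hab).le
    (by field_simp)
  have hxy : a / (a + b) * (x * (a + b) / a) + b / (a + b) * (y * (a + b) / b) = x + y := by
    field_simp
  simp only [smul_eq_mul, hxy] at h
  refine h.trans_eq ?_
  rw [Real.div_rpow (by positivity) ha.le, Real.div_rpow (by positivity) hb.le,
    Real.mul_rpow hx.le hab.le, Real.mul_rpow hy.le hab.le, Real.rpow_sub_one hab.ne',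
    Real.rpow_sub ha, Real.rpow_sub hb, Real.rpow_one, Real.rpow_one]
  field_simp

namespace ENNReal

theorem rpow_le_rpow_of_nonpos_s3 {x y : ℝ≥0∞} {z : ℝ} (hxy : x ≤ y) (hz : z ≤ 0) :
    y ^ z ≤ x ^ z := by
  rw [← neg_neg z, rpow_neg y (-z), rpow_neg x (-z)]
  exact ENNReal.inv_le_inv.2 (rpow_le_rpow hxy (neg_nonneg.2 hz))

theorem add_rpow_le_of_neg {q : ℝ} (hq : q < 0) {a b : ℝ≥0∞} (ha₀ : a ≠ 0) (hb₀ : b ≠ 0)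
    (ha : a ≠ ∞) (hb : b ≠ ∞) (u v : ℝ≥0∞) :
    (u + v) ^ q ≤ (a + b) ^ (q - 1) * (a ^ (1 - q) * u ^ q + b ^ (1 - q) * v ^ q) := by
  have hab : (a + b) ^ (q - 1) ≠ 0 := by simp [rpow_eq_zero_iff, ha₀, ha, hb]
  have ha' : a ^ (1 - q) ≠ 0 := (rpow_pos (pos_iff_ne_zero.2 ha₀) ha).ne'
  have hb' : b ^ (1 - q) ≠ 0 := (rpow_pos (pos_iff_ne_zero.2 hb₀) hb).ne'
  rcases eq_or_ne u 0 with rfl | hu₀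
  · simp [zero_rpow_of_neg hq, mul_top ha', mul_top hab]
  rcases eq_or_ne v 0 with rfl | hv₀
  · simp [zero_rpow_of_neg hq, mul_top hb', mul_top hab]
  rcases eq_or_ne u ∞ with rfl | hu
  · simp [top_rpow_of_neg hq]
  rcases eq_or_ne v ∞ with rfl | hv
  · simp [top_rpow_of_neg hq]
  lift a to NNReal using ha
  lift b to NNReal using hb
  lift u to NNReal using hu
  lift v to NNReal using hv
  simp only [ne_eq, coe_eq_zero] at ha₀ hb₀ hu₀ hv₀
  rw [← coe_add, ← coe_add, ← coe_rpow_of_ne_zero (add_ne_zero.2 (Or.inl hu₀)),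
    ← coe_rpow_of_ne_zero (add_ne_zero.2 (Or.inl ha₀)), ← coe_rpow_of_ne_zero ha₀,
    ← coe_rpow_of_ne_zero hb₀, ← coe_rpow_of_ne_zero hu₀, ← coe_rpow_of_ne_zero hv₀]
  have pos {t : NNReal} (ht : t ≠ 0) : (0 : ℝ) < t := NNReal.coe_pos.2 (pos_iff_ne_zero.2 ht)
  exact_mod_cast Real.add_rpow_le_of_nonpos hq.le (pos ha₀) (pos hb₀) (pos hu₀) (pos hv₀)

theorem lintegral_Lp_add_ge_of_neg {α : Type*} [MeasurableSpace α] {μ : Measure α} {q : ℝ}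
    (hq : q < 0) {f g : α → ℝ≥0∞} (hf : AEMeasurable f μ) :
    (∫⁻ x, f x ^ q ∂μ) ^ (1 / q) + (∫⁻ x, g x ^ q ∂μ) ^ (1 / q) ≤
      (∫⁻ x, (f x + g x) ^ q ∂μ) ^ (1 / q) := by
  set A := (∫⁻ x, f x ^ q ∂μ) ^ (1 / q)
  set B := (∫⁻ x, g x ^ q ∂μ) ^ (1 / q)
  have hq' : 1 / q ≤ 0 := (one_div_neg.2 hq).le
  have hA_le : A ≤ (∫⁻ x, (f x + g x) ^ q ∂μ) ^ (1 / q) :=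
    rpow_le_rpow_of_nonpos_s3 (lintegral_mono fun x ↦ rpow_le_rpow_of_nonpos_s3 le_self_add hq.le) hq'
  have hB_le : B ≤ (∫⁻ x, (f x + g x) ^ q ∂μ) ^ (1 / q) :=
    rpow_le_rpow_of_nonpos_s3 (lintegral_mono fun x ↦ rpow_le_rpow_of_nonpos_s3 le_add_self hq.le) hq'
  rcases eq_or_ne A 0 with hA₀ | hA₀
  · rwa [hA₀, zero_add]
  rcases eq_or_ne B 0 with hB₀ | hB₀
  · rwa [hB₀, add_zero]
  rcases eq_or_ne A ∞ with hA | hA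
  · rw [hA, top_le_iff] at hA_le
    exact hA_le ▸ le_top
  rcases eq_or_ne B ∞ with hB | hB
  · rw [hB, top_le_iff] at hB_le
    exact hB_le ▸ le_top
  have hAB₀ : A + B ≠ 0 := add_ne_zero.2 (Or.inl hA₀)
  have hAB : A + B ≠ ∞ := add_ne_top.2 ⟨hA, hB⟩
  have rpow_one_div_rpow (X : ℝ≥0∞) : (X ^ (1 / q)) ^ q = X := by
    rw [← rpow_mul, one_div_mul_cancel hq.ne, rpow_one]
  have rpow_sub_mul_rpow {X : ℝ≥0∞} (h₀ : X ≠ 0) (h : X ≠ ∞) : X ^ (1 - q) * X ^ q = X := by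
    rw [← rpow_add _ _ h₀ h, sub_add_cancel, rpow_one]
  have key : ∫⁻ x, (f x + g x) ^ q ∂μ ≤ (A + B) ^ q :=
    calc ∫⁻ x, (f x + g x) ^ q ∂μ
        ≤ ∫⁻ x, (A + B) ^ (q - 1) * (A ^ (1 - q) * f x ^ q + B ^ (1 - q) * g x ^ q) ∂μ :=
          lintegral_mono fun x ↦ add_rpow_le_of_neg hq hA₀ hB₀ hA hB (f x) (g x)
      _ = (A + B) ^ (q - 1) * (A ^ (1 - q) * A ^ q + B ^ (1 - q) * B ^ q) := by
          rw [lintegral_const_mul' _ _ (rpow_ne_top_of_ne_zero hAB₀ hAB),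
            lintegral_add_left' ((hf.pow_const q).const_mul _),
            lintegral_const_mul' _ _ (rpow_ne_top_of_nonneg (by linarith) hA),
            lintegral_const_mul' _ _ (rpow_ne_top_of_nonneg (by linarith) hB),
            rpow_one_div_rpow, rpow_one_div_rpow]
      _ = (A + B) ^ q := by
          rw [rpow_sub_mul_rpow hA₀ hA, rpow_sub_mul_rpow hB₀ hB]
          conv_rhs => rw [← sub_add_cancel q 1, rpow_add _ _ hAB₀ hAB, rpow_one]
  calc A + B = ((A + B) ^ q) ^ (1 / q) := by rw [← rpow_mul, mul_one_div_cancel hq.ne, rpow_one]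
    _ ≤ (∫⁻ x, (f x + g x) ^ q ∂μ) ^ (1 / q) := rpow_le_rpow_of_nonpos_s3 key hq'

end ENNReal

theorem measurable_psiM {n : ℕ} (μ : Measure (EuclideanSpace ℝ (Fin n))) [SFinite μ]
    {σ : EuclideanSpace ℝ (Fin n) → EuclideanSpace ℝ (Fin n)} (hσ : Measurable σ) :
    Measurable (PsiM μ σ) :=
  Measurable.lintegral_prod_right' (f := fun p ↦ ENNReal.ofReal |(inner ℝ (σ p.2) p.1 : ℝ)|) <|
    ENNReal.measurable_ofReal.comp <| Measurable.abs <|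
      continuous_inner.measurable.comp ((hσ.comp measurable_snd).prodMk measurable_fst)

theorem energyM_combined_ge_general {n : ℕ} (hn : 2 ≤ n)
    (μ₁ μ₂ : Measure (EuclideanSpace ℝ (Fin n))) [IsFiniteMeasure μ₁]
    (σ₁ σ₂ : EuclideanSpace ℝ (Fin n) → EuclideanSpace ℝ (Fin n))
    (hσ₁m : Measurable σ₁) :
    ENNReal.ofReal (alphaConst n) *
        (∫⁻ ξ, (PsiM μ₁ σ₁ ξ + PsiM μ₂ σ₂ ξ) ^ (-(n : ℝ)) ∂(sphereMeasure n)) ^ (-(1 / (n : ℝ)))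
      ≥ energyM μ₁ σ₁ + energyM μ₂ σ₂ := by
  have hq : -(n : ℝ) < 0 := neg_neg_of_pos (Nat.cast_pos.2 (by omega))
  have reverse_minkowski := ENNReal.lintegral_Lp_add_ge_of_neg (μ := sphereMeasure n) hq
    (measurable_psiM μ₁ hσ₁m).aemeasurable (g := PsiM μ₂ σ₂)
  rw [one_div_neg_eq_neg_one_div] at reverse_minkowski
  rw [ge_iff_le, energyM, energyM, ← mul_add]
  exact mul_le_mul_right reverse_minkowski _

/-- the combined affine energy dominates the sum of the affine energies
(a Minkowski-type inequality for negative exponents). -/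
theorem energyM_combined_ge {n : ℕ} (hn : 2 ≤ n)
    (μ₁ μ₂ : Measure (EuclideanSpace ℝ (Fin n))) [IsFiniteMeasure μ₁] [IsFiniteMeasure μ₂]
    (σ₁ σ₂ : EuclideanSpace ℝ (Fin n) → EuclideanSpace ℝ (Fin n))
    (hσ₁m : Measurable σ₁) (hσ₂m : Measurable σ₂)
    (hσ₁ : ∀ᵐ x ∂μ₁, ‖σ₁ x‖ = 1) (hσ₂ : ∀ᵐ x ∂μ₂, ‖σ₂ x‖ = 1) :
    ENNReal.ofReal (alphaConst n) *
        (∫⁻ ξ, (PsiM μ₁ σ₁ ξ + PsiM μ₂ σ₂ ξ) ^ (-(n : ℝ)) ∂(sphereMeasure n)) ^ (-(1 / (n : ℝ)))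
      ≥ energyM μ₁ σ₁ + energyM μ₂ σ₂ :=
  energyM_combined_ge_general hn μ₁ μ₂ σ₁ σ₂ hσ₁m
end
end

section
/- Let (X, ν) be a measure space, let p > 0 be a real number, and let g₁, g₂ : X → ℝ be measurable functions with g₁ > 0 and g₂ > 0 almost everywhere and ∫_X g₁^{−p} dν < ∞, ∫_X g₂^{−p} dν < ∞. Then (∫_X (g₁ + g₂)^{−p} dν)^{−1/p} ≥ (∫_X g₁^{−p} dν)^{−1/p} + (∫_X g₂^{−p} dν)^{−1/p} (Minkowski's inequality for the negative exponent −p). -/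
/-!
The perspective `φ(a, α) = α ^ (1 + p) * a ^ (-p)` of the convex function `t ↦ t ^ (-p)` is
positively homogeneous and jointly convex, hence subadditive. Integrating
`φ(g₁ + g₂, α + β) ≤ φ(g₁, α) + φ(g₂, β)` with `α = (∫ g₁ ^ (-p)) ^ (-1/p)` and
`β = (∫ g₂ ^ (-p)) ^ (-1/p)`, for which `α ^ (1 + p) * ∫ g₁ ^ (-p) = α` and likewise for `β`,
gives `(α + β) ^ (1 + p) * ∫ (g₁ + g₂) ^ (-p) ≤ α + β`, which rearranges to the claim.
-/

open MeasureTheory Set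

namespace Real

theorem convexOn_rpow_neg {p : ℝ} (hp : 0 ≤ p) : ConvexOn ℝ (Ioi 0) fun x : ℝ ↦ x ^ (-p) := by
  refine ⟨convex_Ioi 0, fun u (hu : 0 < u) v (hv : 0 < v) a b ha hb hab ↦ ?_⟩
  simp only [smul_eq_mul]
  calc (a * u + b * v) ^ (-p) ≤ (u ^ a * v ^ b) ^ (-p) :=
        rpow_le_rpow_of_nonpos (by positivity)
          (geom_mean_le_arith_mean2_weighted ha hb hu.le hv.le hab) (by linarith)
    _ = (u ^ (-p)) ^ a * (v ^ (-p)) ^ b := by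
        rw [mul_rpow (by positivity) (by positivity), ← rpow_mul hu.le, ← rpow_mul hv.le,
          ← rpow_mul hu.le, ← rpow_mul hv.le, mul_comm a, mul_comm b]
    _ ≤ a * u ^ (-p) + b * v ^ (-p) :=
        geom_mean_le_arith_mean2_weighted ha hb (by positivity) (by positivity) hab

theorem add_rpow_one_add_mul_add_rpow_neg_le {p a b α β : ℝ} (hp : 0 ≤ p) (ha : 0 < a)
    (hb : 0 < b) (hα : 0 < α) (hβ : 0 < β) :
    (α + β) ^ (1 + p) * (a + b) ^ (-p) ≤ α ^ (1 + p) * a ^ (-p) + β ^ (1 + p) * b ^ (-p) := by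
  have hs : 0 < α + β := by positivity
  have hconv := (convexOn_rpow_neg hp).2 (div_pos ha hα : a / α ∈ Ioi 0) (div_pos hb hβ)
    (div_pos hα hs).le (div_pos hβ hs).le (by field_simp)
  simp only [smul_eq_mul] at hconv
  have hmid : α / (α + β) * (a / α) + β / (α + β) * (b / β) = (a + b) / (α + β) := by
    field_simp
  have hpersp {x y : ℝ} (hx : 0 < x) (hy : 0 < y) :
      y ^ (1 + p) * x ^ (-p) = y * (x / y) ^ (-p) := by
    rw [div_rpow hx.le hy.le, rpow_add hy, rpow_one, rpow_neg hy.le]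
    field_simp
  calc (α + β) ^ (1 + p) * (a + b) ^ (-p)
      = (α + β) * ((a + b) / (α + β)) ^ (-p) := hpersp (add_pos ha hb) hs
    _ = (α + β) * (α / (α + β) * (a / α) + β / (α + β) * (b / β)) ^ (-p) := by rw [hmid]
    _ ≤ (α + β) * (α / (α + β) * (a / α) ^ (-p) + β / (α + β) * (b / β) ^ (-p)) := by gcongr
    _ = α * (a / α) ^ (-p) + β * (b / β) ^ (-p) := by field_simp
    _ = α ^ (1 + p) * a ^ (-p) + β ^ (1 + p) * b ^ (-p) := by rw [hpersp ha hα, hpersp hb hβ]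

theorem rpow_neg_one_div_rpow_one_add_mul_self {p A : ℝ} (hp : 0 < p) (hA : 0 ≤ A) :
    (A ^ (-(1 / p))) ^ (1 + p) * A = A ^ (-(1 / p)) := by
  rcases hA.eq_or_lt with rfl | hA
  · rw [mul_zero, zero_rpow (neg_ne_zero.mpr (one_div_pos.mpr hp).ne')]
  rw [← rpow_mul hA.le, ← rpow_add_one hA.ne']
  congr 1
  field_simp
  ring

theorem le_rpow_neg_one_div_of_rpow_one_add_mul_le {p C s : ℝ} (hp : 0 < p) (hC : 0 < C)
    (hs : 0 < s) (h : s ^ (1 + p) * C ≤ s) : s ≤ C ^ (-(1 / p)) := by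
  rw [show -(1 / p) = (-p)⁻¹ by ring, le_rpow_inv_iff_of_neg hs hC (neg_neg_of_pos hp),
    rpow_neg hs.le, ← one_div, le_div_iff₀ (rpow_pos_of_pos hs p)]
  rw [rpow_add hs, rpow_one, mul_assoc] at h
  rw [mul_comm]
  exact le_of_mul_le_mul_left (by rwa [mul_one]) hs

end Real

open Real

theorem integral_pos_of_ae_pos {X : Type*} [MeasurableSpace X] {ν : Measure X} [NeZero ν]
    {f : X → ℝ} (hf : ∀ᵐ x ∂ν, 0 < f x) (hfi : Integrable f ν) : 0 < ∫ x, f x ∂ν := by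
  have hsupp : Function.support f =ᵐ[ν] univ := by
    refine ae_eq_univ.mpr (measure_mono_null (fun x hx ↦ ?_) (ae_iff.mp hf))
    simp_all
  rw [integral_pos_iff_support_of_nonneg_ae (hf.mono fun _ h ↦ h.le) hfi, measure_congr hsupp]
  exact Measure.measure_univ_pos.mpr (NeZero.ne ν)

theorem integrable_rpow_neg_add {X : Type*} [MeasurableSpace X] {ν : Measure X} {p : ℝ}
    (hp : 0 ≤ p) {g₁ g₂ : X → ℝ} (hg₁m : Measurable g₁) (hg₂m : Measurable g₂)
    (hg₁pos : ∀ᵐ x ∂ν, 0 < g₁ x) (hg₂nonneg : ∀ᵐ x ∂ν, 0 ≤ g₂ x)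
    (hg₁int : Integrable (fun x ↦ g₁ x ^ (-p)) ν) :
    Integrable (fun x ↦ (g₁ x + g₂ x) ^ (-p)) ν := by
  refine hg₁int.mono' ((hg₁m.add hg₂m).pow_const _).aestronglyMeasurable ?_
  filter_upwards [hg₁pos, hg₂nonneg] with x h₁ h₂
  rw [norm_of_nonneg (by positivity)]
  exact rpow_le_rpow_of_nonpos h₁ (by linarith) (by linarith)

theorem mul_integral_rpow_neg_add_le {X : Type*} [MeasurableSpace X] {ν : Measure X} {p : ℝ}
    (hp : 0 ≤ p) {g₁ g₂ : X → ℝ} (hg₁pos : ∀ᵐ x ∂ν, 0 < g₁ x) (hg₂pos : ∀ᵐ x ∂ν, 0 < g₂ x)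
    (hg₁int : Integrable (fun x ↦ g₁ x ^ (-p)) ν) (hg₂int : Integrable (fun x ↦ g₂ x ^ (-p)) ν)
    (hint : Integrable (fun x ↦ (g₁ x + g₂ x) ^ (-p)) ν) {α β : ℝ} (hα : 0 < α) (hβ : 0 < β) :
    (α + β) ^ (1 + p) * ∫ x, (g₁ x + g₂ x) ^ (-p) ∂ν ≤
      α ^ (1 + p) * ∫ x, g₁ x ^ (-p) ∂ν + β ^ (1 + p) * ∫ x, g₂ x ^ (-p) ∂ν := by
  rw [← integral_const_mul, ← integral_const_mul, ← integral_const_mul,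
    ← integral_add (hg₁int.const_mul _) (hg₂int.const_mul _)]
  refine integral_mono_ae (hint.const_mul _) ((hg₁int.const_mul _).add (hg₂int.const_mul _)) ?_
  filter_upwards [hg₁pos, hg₂pos] with x h₁ h₂
  exact add_rpow_one_add_mul_add_rpow_neg_le hp h₁ h₂ hα hβ

/-- Minkowski's inequality for the negative exponent −p. -/
theorem minkowski_neg_exponent {X : Type*} [MeasurableSpace X] (ν : Measure X)
    (p : ℝ) (hp : 0 < p) (g₁ g₂ : X → ℝ)
    (hg₁m : Measurable g₁) (hg₂m : Measurable g₂)
    (hg₁pos : ∀ᵐ x ∂ν, 0 < g₁ x) (hg₂pos : ∀ᵐ x ∂ν, 0 < g₂ x)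
    (hg₁int : Integrable (fun x => g₁ x ^ (-p)) ν)
    (hg₂int : Integrable (fun x => g₂ x ^ (-p)) ν) :
    (∫ x, (g₁ x + g₂ x) ^ (-p) ∂ν) ^ (-(1 / p)) ≥
      (∫ x, g₁ x ^ (-p) ∂ν) ^ (-(1 / p)) + (∫ x, g₂ x ^ (-p) ∂ν) ^ (-(1 / p)) := by
  rcases eq_or_ne ν 0 with rfl | hν
  · simp only [integral_zero_measure, zero_rpow (neg_ne_zero.mpr (one_div_pos.mpr hp).ne'),
      add_zero, ge_iff_le, le_refl]
  have : NeZero ν := ⟨hν⟩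
  have hint := integrable_rpow_neg_add hp.le hg₁m hg₂m hg₁pos (hg₂pos.mono fun _ h ↦ h.le) hg₁int
  have hA : 0 < ∫ x, g₁ x ^ (-p) ∂ν :=
    integral_pos_of_ae_pos (hg₁pos.mono fun _ h ↦ rpow_pos_of_pos h _) hg₁int
  have hB : 0 < ∫ x, g₂ x ^ (-p) ∂ν :=
    integral_pos_of_ae_pos (hg₂pos.mono fun _ h ↦ rpow_pos_of_pos h _) hg₂int
  have hC : 0 < ∫ x, (g₁ x + g₂ x) ^ (-p) ∂ν := integral_pos_of_ae_pos
    (by filter_upwards [hg₁pos, hg₂pos] with x h₁ h₂ using rpow_pos_of_pos (add_pos h₁ h₂) _) hint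
  refine le_rpow_neg_one_div_of_rpow_one_add_mul_le hp hC (by positivity) ?_
  calc _ ≤ _ := mul_integral_rpow_neg_add_le hp.le hg₁pos hg₂pos hg₁int hg₂int hint
        (rpow_pos_of_pos hA _) (rpow_pos_of_pos hB _)
    _ = _ := by rw [rpow_neg_one_div_rpow_one_add_mul_self hp hA.le,
        rpow_neg_one_div_rpow_one_add_mul_self hp hB.le]
end

section
/- Let n ≥ 2 and let V ⊆ ℝⁿ be a linear subspace with 1 ≤ dim V ≤ n − 1, and let P : ℝⁿ → ℝⁿ denote the orthogonal projection onto V. Then ∫_{S^{n−1}} |Pξ|^{−n} dξ = ∞, where the integral is the Lebesgue integral (in the extended nonnegative reals, with 0^{−n} = ∞) with respect to the (n−1)-dimensional Hausdorff (surface) measure on the unit sphere S^{n−1}. -/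
/-!
Pick a unit vector `u ⊥ V` and put `W = u^⊥`. A point `y ∈ W` with `‖y‖ ≤ ε ≤ 1` is the
projection onto `W` of the point `ξ = y + √(1 - ‖y‖²) u` of the sphere, and `Pξ = Py` has norm
at most `ε`. Projecting onto `W` does not increase Hausdorff measure, and `μH[n-1]` is a Haar
measure on the `(n-1)`-dimensional space `W`, so `{ξ ∈ S^{n-1} | ‖Pξ‖ ≤ ε}` has measure at least
`c ε^(n-1)`. On this set the integrand is at least `ε^(-n)`, so the integral is at least `c / ε`
for every small `ε > 0`.
-/

open MeasureTheory ENNReal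

noncomputable section

open Metric Module Filter Topology

section LIntegral

variable {α : Type*} [MeasurableSpace α] {μ : Measure α} {g : α → ℝ} {p : ℝ}

lemma rpow_neg_mul_measure_le_lintegral (hg : Measurable g) (hp : 0 ≤ p) (ε : ℝ) :
    ENNReal.ofReal ε ^ (-p) * μ {x | g x ≤ ε} ≤ ∫⁻ x, ENNReal.ofReal (g x) ^ (-p) ∂μ := by
  rw [← lintegral_indicator_const (measurableSet_le hg measurable_const)]
  refine lintegral_mono fun x => Set.indicator_apply_le' (fun hx => ?_) fun _ => zero_le
  rw [ENNReal.rpow_neg, ENNReal.rpow_neg]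
  exact ENNReal.inv_le_inv.2 (ENNReal.rpow_le_rpow (ENNReal.ofReal_le_ofReal hx) hp)

lemma lintegral_rpow_neg_eq_top_of_mul_pow_le_measure (hg : Measurable g) {q : ℕ} (hqp : q < p)
    {c : ℝ≥0∞} (hc : c ≠ 0)
    (hμ : ∀ ε, 0 < ε → ε ≤ 1 → ENNReal.ofReal (ε ^ q) * c ≤ μ {x | g x ≤ ε}) :
    ∫⁻ x, ENNReal.ofReal (g x) ^ (-p) ∂μ = ⊤ := by
  have hp : 0 ≤ p := (Nat.cast_nonneg q).trans hqp.le
  have hbound : ∀ ε, 0 < ε → ε ≤ 1 →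
      c * ENNReal.ofReal ε ^ ((q : ℝ) - p) ≤ ∫⁻ x, ENNReal.ofReal (g x) ^ (-p) ∂μ := by
    intro ε hε hε1
    have hε' : ENNReal.ofReal ε ≠ 0 := by simpa using hε
    calc c * ENNReal.ofReal ε ^ ((q : ℝ) - p)
        = ENNReal.ofReal ε ^ (-p) * (ENNReal.ofReal (ε ^ q) * c) := by
          rw [ENNReal.ofReal_pow hε.le, ← ENNReal.rpow_natCast, sub_eq_neg_add,
            ENNReal.rpow_add _ _ hε' ENNReal.ofReal_ne_top]
          ring
      _ ≤ ENNReal.ofReal ε ^ (-p) * μ {x | g x ≤ ε} := by gcongr; exact hμ ε hε hε1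
      _ ≤ _ := rpow_neg_mul_measure_le_lintegral hg hp ε
  have hlim : Tendsto (fun ε => c * ENNReal.ofReal ε ^ ((q : ℝ) - p)) (𝓝[>] 0) (𝓝 ⊤) := by
    have h0 : Tendsto ENNReal.ofReal (𝓝[>] 0) (𝓝 0) := by
      simpa using ENNReal.continuous_ofReal.continuousWithinAt.tendsto (x := 0) (s := Set.Ioi 0)
    have := ((ENNReal.continuous_rpow_const (y := (q : ℝ) - p)).tendsto 0).comp h0
    rw [ENNReal.zero_rpow_of_neg (by linarith)] at this
    simpa [ENNReal.mul_top hc] using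
      ENNReal.Tendsto.const_mul (a := c) this (Or.inl ENNReal.top_ne_zero)
  refine top_le_iff.1 <| le_of_tendsto hlim ?_
  filter_upwards [Ioc_mem_nhdsGT zero_lt_one] with ε hε using hbound ε hε.1 hε.2

end LIntegral

section Sphere

variable {E : Type*} [NormedAddCommGroup E] [InnerProductSpace ℝ E]
  {V : Submodule ℝ E} [V.HasOrthogonalProjection] {u : E}

lemma exists_norm_eq_one_mem_orthogonal (hV : V ≠ ⊤) : ∃ u ∈ Vᗮ, ‖u‖ = 1 := by
  have : Nontrivial Vᗮ :=
    Submodule.nontrivial_iff_ne_bot.2 (by rwa [Ne, Submodule.orthogonal_eq_bot_iff])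
  obtain ⟨u, hu⟩ := exists_norm_eq Vᗮ zero_le_one
  exact ⟨u, u.2, hu⟩

lemma exists_mem_sphere_orthogonalProjectionOnto_eq (hu : u ∈ Vᗮ) (hu1 : ‖u‖ = 1)
    (y : (ℝ ∙ u)ᗮ) (hy : ‖y‖ ≤ 1) :
    ∃ ξ ∈ sphere (0 : E) 1, (ℝ ∙ u)ᗮ.orthogonalProjectionOnto ξ = y ∧
      V.orthogonalProjectionOnto ξ = V.orthogonalProjectionOnto (y : E) := by
  obtain ⟨t, ht0, ht⟩ : ∃ t : ℝ, 0 ≤ t ∧ ‖(y : E)‖ ^ 2 + t ^ 2 = 1 :=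
    ⟨√(1 - ‖y‖ ^ 2), Real.sqrt_nonneg _, by
      rw [Real.sq_sqrt (by nlinarith [norm_nonneg y]), Submodule.coe_norm]; ring⟩
  have hyu : inner ℝ (y : E) (t • u) = 0 := by
    rw [inner_smul_right, real_inner_comm, Submodule.mem_orthogonal_singleton_iff_inner_right.1
      y.2, mul_zero]
  refine ⟨y + t • u, ?_, ?_, ?_⟩
  · have hξ := norm_add_sq_eq_norm_sq_add_norm_sq_real hyu
    rw [norm_smul, hu1, Real.norm_of_nonneg ht0, mul_one] at hξ
    rw [mem_sphere_zero_iff_norm]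
    nlinarith [norm_nonneg ((y : E) + t • u)]
  · rw [map_add, Submodule.orthogonalProjectionOnto_mem_subspace_eq_self, map_smul,
      Submodule.orthogonalProjectionOnto_orthogonalComplement_singleton_eq_zero, smul_zero,
      add_zero]
  · rw [map_add, map_smul, Submodule.orthogonalProjectionOnto_apply_of_mem_orthogonal hu,
      smul_zero, add_zero]

lemma closedBall_subset_image_orthogonalProjectionOnto (hu : u ∈ Vᗮ) (hu1 : ‖u‖ = 1)
    {ε : ℝ} (hε : ε ≤ 1) :
    closedBall (0 : (ℝ ∙ u)ᗮ) ε ⊆ (ℝ ∙ u)ᗮ.orthogonalProjectionOnto ''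
      ({ξ | ‖(V.orthogonalProjectionOnto ξ : E)‖ ≤ ε} ∩ sphere (0 : E) 1) := by
  intro y hy
  rw [mem_closedBall_zero_iff] at hy
  obtain ⟨ξ, hξ, hξy, hξV⟩ := exists_mem_sphere_orthogonalProjectionOnto_eq hu hu1 y (hy.trans hε)
  refine ⟨ξ, ⟨?_, hξ⟩, hξy⟩
  calc ‖(V.orthogonalProjectionOnto ξ : E)‖ = ‖V.orthogonalProjectionOnto (y : E)‖ := by
        rw [hξV, Submodule.coe_norm]
    _ ≤ ‖y‖ := V.norm_orthogonalProjectionOnto_apply_le _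
    _ ≤ ε := hy

end Sphere

theorem lintegral_norm_orthogonalProjectionOnto_rpow_neg_eq_top {E : Type*}
    [NormedAddCommGroup E] [InnerProductSpace ℝ E] [FiniteDimensional ℝ E]
    [MeasurableSpace E] [BorelSpace E] {V : Submodule ℝ E} (hV : V ≠ ⊤) {p : ℝ}
    (hp : (finrank ℝ E : ℝ) - 1 < p) :
    ∫⁻ ξ, ENNReal.ofReal ‖(V.orthogonalProjectionOnto ξ : E)‖ ^ (-p)
      ∂(μH[(finrank ℝ E : ℝ) - 1].restrict (sphere (0 : E) 1)) = ⊤ := by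
  obtain ⟨u, hu, hu1⟩ := exists_norm_eq_one_mem_orthogonal hV
  set W := (ℝ ∙ u)ᗮ
  have hW : (finrank ℝ W : ℝ) = finrank ℝ E - 1 := by
    have := (ℝ ∙ u).finrank_add_finrank_orthogonal
    rw [finrank_span_singleton (by rintro rfl; simp at hu1)] at this
    rw [← this]; push_cast; ring
  have hg : Measurable fun ξ : E => ‖(V.orthogonalProjectionOnto ξ : E)‖ := by fun_prop
  refine lintegral_rpow_neg_eq_top_of_mul_pow_le_measure hg (q := finrank ℝ W) (by rwa [hW])
    (measure_ball_pos μH[finrank ℝ W] (0 : W) one_pos).ne' fun ε hε hε1 => ?_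
  rw [Measure.restrict_apply (measurableSet_le hg measurable_const), ← hW,
    ← Measure.addHaar_closedBall _ _ hε.le]
  exact (measure_mono (closedBall_subset_image_orthogonalProjectionOnto hu hu1 hε1)).trans
    (hausdorffMeasure_orthogonalProjectionOnto_le _ _ _ (Nat.cast_nonneg _))

theorem integral_proj_norm_neg_pow_eq_top_general {n : ℕ} (hn : 2 ≤ n)
    (V : Submodule ℝ (EuclideanSpace ℝ (Fin n)))
    (hV2 : Module.finrank ℝ V ≤ n - 1) :
    ∫⁻ ξ, (ENNReal.ofReal ‖(Submodule.orthogonalProjectionOnto V ξ : EuclideanSpace ℝ (Fin n))‖) ^ (-(n : ℝ))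
        ∂(sphereMeasure n) = ⊤ := by
  have hV : V ≠ ⊤ := by
    rintro rfl
    rw [finrank_top, finrank_euclideanSpace_fin] at hV2
    omega
  simpa [sphereMeasure] using lintegral_norm_orthogonalProjectionOnto_rpow_neg_eq_top hV
    (p := n) (by simp)

/-- if V is a proper nontrivial subspace of ℝⁿ and P the orthogonal
projection onto V, then ∫_{S^{n-1}} |Pξ|^{-n} dξ = ∞. -/
theorem integral_proj_norm_neg_pow_eq_top {n : ℕ} (hn : 2 ≤ n)
    (V : Submodule ℝ (EuclideanSpace ℝ (Fin n)))
    (hV1 : 1 ≤ Module.finrank ℝ V) (hV2 : Module.finrank ℝ V ≤ n - 1) :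
    ∫⁻ ξ, (ENNReal.ofReal ‖(Submodule.orthogonalProjectionOnto V ξ : EuclideanSpace ℝ (Fin n))‖) ^ (-(n : ℝ))
        ∂(sphereMeasure n) = ⊤ :=
  integral_proj_norm_neg_pow_eq_top_general hn V hV2

end
end

section
/- Let n ≥ 2 and let u_k (k ∈ ℕ) and u_0 be smooth compactly supported functions on ℝⁿ such that u_k → u_0 in L¹(K) for every compact set K ⊆ ℝⁿ, sup_k ∫_{ℝⁿ} |∇u_k| dx < ∞, and ∫_{ℝⁿ} |∇u_0(x)·ξ| dx > 0 for every ξ ∈ S^{n−1}. Then there exist a constant c₀ > 0 and an index k₀ ∈ ℕ, both independent of ξ, such that for all k ≥ k₀ and all ξ ∈ S^{n−1} one has ∫_{ℝⁿ} |∇u_k(x)·ξ| dx ≥ c₀. -/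
open MeasureTheory Filter

section Aux

variable {n : ℕ}

private lemma dirDeriv_contDiff {f : EuclideanSpace ℝ (Fin n) → ℝ} (hf : ContDiff ℝ (⊤ : ℕ∞) f)
    (ξ : EuclideanSpace ℝ (Fin n)) :
    ContDiff ℝ (⊤ : ℕ∞) fun x => fderiv ℝ f x ξ :=
  (hf.fderiv_right (by simp)).clm_apply contDiff_const

private lemma dirDeriv_supp {f : EuclideanSpace ℝ (Fin n) → ℝ} (hs : HasCompactSupport f)
    (ξ : EuclideanSpace ℝ (Fin n)) :
    HasCompactSupport fun x => fderiv ℝ f x ξ :=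
  hs.fderiv_apply ℝ ξ

private lemma dirDeriv_integrable {f : EuclideanSpace ℝ (Fin n) → ℝ} (hf : ContDiff ℝ (⊤ : ℕ∞) f)
    (hs : HasCompactSupport f) (ξ : EuclideanSpace ℝ (Fin n)) :
    Integrable (fun x => |fderiv ℝ f x ξ|) :=
  ((dirDeriv_contDiff hf ξ).continuous.abs).integrable_of_hasCompactSupport
    ((dirDeriv_supp hs ξ).abs)

/-- Lipschitz-type bound in the direction variable. -/
private lemma F_lip {f : EuclideanSpace ℝ (Fin n) → ℝ} (hf : ContDiff ℝ (⊤ : ℕ∞) f)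
    (hs : HasCompactSupport f) (ξ η : EuclideanSpace ℝ (Fin n)) :
    (∫ x, |fderiv ℝ f x ξ|) - ∫ x, |fderiv ℝ f x η| ≤ (∫ x, ‖fderiv ℝ f x‖) * ‖ξ - η‖ := by
  have hd : ContDiff ℝ (⊤ : ℕ∞) (fderiv ℝ f) := hf.fderiv_right (by simp)
  have hnorm : Integrable (fun x => ‖fderiv ℝ f x‖) :=
    (hd.continuous.norm).integrable_of_hasCompactSupport ((hs.fderiv ℝ).norm)
  have h1 : (∫ x, |fderiv ℝ f x ξ|) - ∫ x, |fderiv ℝ f x η| =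
      ∫ x, (|fderiv ℝ f x ξ| - |fderiv ℝ f x η|) :=
    (integral_sub (dirDeriv_integrable hf hs ξ) (dirDeriv_integrable hf hs η)).symm
  rw [h1, ← integral_mul_const]
  refine integral_mono ((dirDeriv_integrable hf hs ξ).sub (dirDeriv_integrable hf hs η))
    (hnorm.mul_const _) (fun x => ?_)
  calc |fderiv ℝ f x ξ| - |fderiv ℝ f x η| ≤ |fderiv ℝ f x ξ - fderiv ℝ f x η| :=
        abs_sub_abs_le_abs_sub _ _
    _ = |fderiv ℝ f x (ξ - η)| := by rw [map_sub]
    _ = ‖fderiv ℝ f x (ξ - η)‖ := (Real.norm_eq_abs _).symm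
    _ ≤ ‖fderiv ℝ f x‖ * ‖ξ - η‖ := (fderiv ℝ f x).le_opNorm _

/-- Key step: per-direction eventual lower bound via integration by parts against a smooth
approximation of the sign of the limiting directional derivative. -/
private lemma key_liminf
    (u : ℕ → EuclideanSpace ℝ (Fin n) → ℝ) (u₀ : EuclideanSpace ℝ (Fin n) → ℝ)
    (hsm : ∀ k, ContDiff ℝ (⊤ : ℕ∞) (u k)) (hsupp : ∀ k, HasCompactSupport (u k))
    (hsm₀ : ContDiff ℝ (⊤ : ℕ∞) u₀) (hsupp₀ : HasCompactSupport u₀)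
    (hconv : ∀ K : Set (EuclideanSpace ℝ (Fin n)), IsCompact K →
      Tendsto (fun k => ∫ x in K, |u k x - u₀ x|) atTop (nhds 0))
    (ξ : EuclideanSpace ℝ (Fin n)) {δ : ℝ} (hδ : 0 < δ) :
    ∀ᶠ k in atTop, (∫ x, |fderiv ℝ u₀ x ξ|) - δ ≤ ∫ x, |fderiv ℝ (u k) x ξ| := by
  have hgc : ContDiff ℝ (⊤ : ℕ∞) fun x => fderiv ℝ u₀ x ξ := dirDeriv_contDiff hsm₀ ξ
  have hgs : HasCompactSupport fun x => fderiv ℝ u₀ x ξ := dirDeriv_supp hsupp₀ ξ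
  set g : EuclideanSpace ℝ (Fin n) → ℝ := fun x => fderiv ℝ u₀ x ξ with hg_def
  set K : Set (EuclideanSpace ℝ (Fin n)) := tsupport g with hK_def
  have hK : IsCompact K := hgs
  set V : ℝ := (volume K).toReal with hV_def
  have hV : 0 ≤ V := ENNReal.toReal_nonneg
  set ε : ℝ := (δ / 2) / (V + 1) with hε_def
  have hε : 0 < ε := by positivity
  set s : EuclideanSpace ℝ (Fin n) → ℝ := fun x => Real.sqrt ((g x) ^ 2 + ε ^ 2) with hs_def
  have hspos : ∀ x, 0 < s x := fun x => Real.sqrt_pos.mpr (by positivity)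
  have hssm : ContDiff ℝ (⊤ : ℕ∞) s :=
    ContDiff.sqrt ((hgc.pow 2).add contDiff_const) (fun x => by positivity)
  set φ : EuclideanSpace ℝ (Fin n) → ℝ := fun x => g x / s x with hφ_def
  have hφsm : ContDiff ℝ (⊤ : ℕ∞) φ := hgc.div hssm (fun x => (hspos x).ne')
  have hφs : HasCompactSupport φ :=
    hgs.comp_left (g := fun t : ℝ => t / Real.sqrt (t ^ 2 + ε ^ 2)) (by simp)
  have hφ1 : ∀ x, |φ x| ≤ 1 := by
    intro x
    rw [hφ_def, abs_div, abs_of_pos (hspos x), div_le_one (hspos x)]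
    calc |g x| = Real.sqrt ((g x) ^ 2) := (Real.sqrt_sq_eq_abs _).symm
      _ ≤ s x := Real.sqrt_le_sqrt (by nlinarith [sq_nonneg ε])
  have hgabs : ∀ x, |g x| ≤ s x := fun x => by
    calc |g x| = Real.sqrt ((g x) ^ 2) := (Real.sqrt_sq_eq_abs _).symm
      _ ≤ s x := Real.sqrt_le_sqrt (by nlinarith [sq_nonneg ε])
  -- pointwise lower bound : |g| - g*φ ≤ ε on K, = 0 outside
  have hpt : ∀ x, |g x| - g x * φ x ≤ K.indicator (fun _ => ε) x := by
    intro x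
    by_cases hx : x ∈ K
    · rw [Set.indicator_of_mem hx]
      have hsx := hspos x
      have hs1 : s x ≤ |g x| + ε := by
        rw [hs_def]
        calc Real.sqrt ((g x) ^ 2 + ε ^ 2) ≤ Real.sqrt ((|g x| + ε) ^ 2) :=
              Real.sqrt_le_sqrt (by nlinarith [abs_nonneg (g x), sq_abs (g x)])
          _ = |g x| + ε := Real.sqrt_sq (by positivity)
      have hs2 : |g x| ≤ s x := hgabs x
      have hmul : g x * φ x = (g x) ^ 2 / s x := by rw [hφ_def]; ring
      rw [hmul]
      have key : |g x| * s x - (g x) ^ 2 ≤ ε * s x := by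
        nlinarith [sq_abs (g x), mul_le_mul_of_nonneg_left
          (show s x - |g x| ≤ ε by linarith) (abs_nonneg (g x)),
          mul_le_mul_of_nonneg_right hs2 hε.le]
      have : |g x| - ε ≤ (g x) ^ 2 / s x := by
        rw [le_div_iff₀ hsx]; nlinarith
      linarith
    · have hgx : g x = 0 := image_eq_zero_of_notMem_tsupport hx
      rw [Set.indicator_of_notMem hx]
      simp [hgx]
  have hgint : Integrable (fun x => |g x|) := dirDeriv_integrable hsm₀ hsupp₀ ξ
  have hφc : Continuous φ := hφsm.continuous
  have hgφint : Integrable (fun x => g x * φ x) :=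
    (hgc.continuous.mul hφc).integrable_of_hasCompactSupport (hgs.mul_right)
  -- integral lower bound for the pairing with the limit function
  have step1 : (∫ x, |g x|) - (∫ x, g x * φ x) ≤ δ / 2 := by
    have hKm : MeasurableSet K := (isClosed_tsupport g).measurableSet
    calc (∫ x, |g x|) - ∫ x, g x * φ x = ∫ x, (|g x| - g x * φ x) :=
          (integral_sub hgint hgφint).symm
      _ ≤ ∫ x, K.indicator (fun _ => ε) x := by
          refine integral_mono (hgint.sub hgφint) ?_ hpt
          exact (integrable_indicator_iff hKm).mpr
            ((integrableOn_const_iff (by simp)).mpr (Or.inr hK.measure_lt_top))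
      _ = (volume K).toReal • ε := by rw [integral_indicator_const _ hKm]; rfl
      _ = V * ε := by rw [smul_eq_mul, hV_def]
      _ ≤ δ / 2 := by
          have h1 : V * ε ≤ (V + 1) * ε := by nlinarith
          have h2 : (V + 1) * ε = δ / 2 := by
            rw [hε_def]; field_simp
          linarith
  -- integration by parts
  have ibp : ∀ (v : EuclideanSpace ℝ (Fin n) → ℝ), ContDiff ℝ (⊤ : ℕ∞) v → HasCompactSupport v →
      ∫ x, fderiv ℝ v x ξ * φ x = - ∫ x, fderiv ℝ φ x ξ * v x := by
    intro v hv hvs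
    have h1 : Integrable (fun x => fderiv ℝ φ x ξ * v x) :=
      (((dirDeriv_contDiff hφsm ξ).continuous).mul hv.continuous).integrable_of_hasCompactSupport
        ((dirDeriv_supp hφs ξ).mul_right)
    have h2 : Integrable (fun x => φ x * fderiv ℝ v x ξ) :=
      (hφc.mul (dirDeriv_contDiff hv ξ).continuous).integrable_of_hasCompactSupport
        (hφs.mul_right)
    have h3 : Integrable (fun x => φ x * v x) :=
      (hφc.mul hv.continuous).integrable_of_hasCompactSupport (hφs.mul_right)
    have := integral_mul_fderiv_eq_neg_fderiv_mul_of_integrable h1 h2 h3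
      (fun x _ => hφsm.differentiable (by simp) x) (fun x _ => hv.differentiable (by simp) x)
    rw [show (fun x => fderiv ℝ v x ξ * φ x) = fun x => φ x * fderiv ℝ v x ξ from
      funext fun x => mul_comm _ _]
    exact this
  -- bound on the derivative of the test function
  obtain ⟨M, hM⟩ := (dirDeriv_supp hφs ξ).exists_bound_of_continuous
    ((dirDeriv_contDiff hφsm ξ).continuous)
  have hM0 : 0 ≤ M := le_trans (norm_nonneg _) (hM 0)
  set K' : Set (EuclideanSpace ℝ (Fin n)) := tsupport fun x => fderiv ℝ φ x ξ with hK'_def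
  have hK' : IsCompact K' := dirDeriv_supp hφs ξ
  have hc : (0 : ℝ) < (δ / 2) / (M + 1) := by positivity
  have hev : ∀ᶠ k in atTop, (∫ x in K', |u k x - u₀ x|) < (δ / 2) / (M + 1) :=
    (hconv K' hK').eventually_lt_const hc
  filter_upwards [hev] with k hk
  -- integrability facts for index k
  have hIk : Integrable (fun x => |fderiv ℝ (u k) x ξ|) := dirDeriv_integrable (hsm k) (hsupp k) ξ
  have h2k : Integrable (fun x => fderiv ℝ (u k) x ξ * φ x) :=
    ((dirDeriv_contDiff (hsm k) ξ).continuous.mul hφc).integrable_of_hasCompactSupport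
      ((dirDeriv_supp (hsupp k) ξ).mul_right)
  have hA : ∫ x, fderiv ℝ (u k) x ξ * φ x ≤ ∫ x, |fderiv ℝ (u k) x ξ| := by
    refine integral_mono h2k hIk (fun x => ?_)
    calc fderiv ℝ (u k) x ξ * φ x ≤ |fderiv ℝ (u k) x ξ * φ x| := le_abs_self _
      _ = |fderiv ℝ (u k) x ξ| * |φ x| := abs_mul _ _
      _ ≤ |fderiv ℝ (u k) x ξ| * 1 := mul_le_mul_of_nonneg_left (hφ1 x) (abs_nonneg _)
      _ = |fderiv ℝ (u k) x ξ| := mul_one _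
  have hBk := ibp (u k) (hsm k) (hsupp k)
  have hB0 := ibp u₀ hsm₀ hsupp₀
  -- comparing pairings of u k and u₀ against the derivative of φ
  have h1k : Integrable (fun x => fderiv ℝ φ x ξ * u k x) :=
    (((dirDeriv_contDiff hφsm ξ).continuous).mul (hsm k).continuous).integrable_of_hasCompactSupport
      ((dirDeriv_supp hφs ξ).mul_right)
  have h10 : Integrable (fun x => fderiv ℝ φ x ξ * u₀ x) :=
    (((dirDeriv_contDiff hφsm ξ).continuous).mul hsm₀.continuous).integrable_of_hasCompactSupport
      ((dirDeriv_supp hφs ξ).mul_right)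
  have hdiff : |(∫ x, fderiv ℝ φ x ξ * u k x) - ∫ x, fderiv ℝ φ x ξ * u₀ x| ≤ δ / 2 := by
    rw [← integral_sub h1k h10]
    have heq : (fun x => fderiv ℝ φ x ξ * u k x - fderiv ℝ φ x ξ * u₀ x)
        = fun x => fderiv ℝ φ x ξ * (u k x - u₀ x) := funext fun x => by ring
    rw [heq]
    have hzero : ∀ x ∉ K', fderiv ℝ φ x ξ * (u k x - u₀ x) = 0 := by
      intro x hx
      have : fderiv ℝ φ x ξ = 0 := image_eq_zero_of_notMem_tsupport (f := fun x => fderiv ℝ φ x ξ) hx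
      rw [this, zero_mul]
    calc |∫ x, fderiv ℝ φ x ξ * (u k x - u₀ x)|
        ≤ ∫ x, |fderiv ℝ φ x ξ * (u k x - u₀ x)| := by
          have := norm_integral_le_integral_norm (μ := volume)
            (fun x => fderiv ℝ φ x ξ * (u k x - u₀ x))
          simpa only [Real.norm_eq_abs] using this
      _ = ∫ x in K', |fderiv ℝ φ x ξ * (u k x - u₀ x)| := by
          refine (setIntegral_eq_integral_of_forall_compl_eq_zero (fun x hx => ?_)).symm
          rw [hzero x hx, abs_zero]
      _ ≤ ∫ x in K', M * |u k x - u₀ x| := by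
          refine setIntegral_mono_on ?_ ?_ (isClosed_tsupport _).measurableSet (fun x _ => ?_)
          · exact (((dirDeriv_contDiff hφsm ξ).continuous.mul
              ((hsm k).continuous.sub hsm₀.continuous)).abs).continuousOn.integrableOn_compact hK'
          · exact (continuous_const.mul
              ((hsm k).continuous.sub hsm₀.continuous).abs).continuousOn.integrableOn_compact hK'
          · rw [abs_mul]
            exact mul_le_mul_of_nonneg_right (by simpa [Real.norm_eq_abs] using hM x) (abs_nonneg _)
      _ = M * ∫ x in K', |u k x - u₀ x| := integral_const_mul _ _
      _ ≤ M * ((δ / 2) / (M + 1)) := mul_le_mul_of_nonneg_left hk.le hM0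
      _ ≤ δ / 2 := by
          have h1 : M / (M + 1) ≤ 1 := by
            rw [div_le_one (by positivity)]; linarith
          have h2 : M * (δ / 2 / (M + 1)) = δ / 2 * (M / (M + 1)) := by ring
          nlinarith [mul_le_mul_of_nonneg_left h1 (by positivity : (0:ℝ) ≤ δ / 2)]
  have habs := abs_le.mp hdiff
  -- final chain
  have hBval : (∫ x, g x * φ x) = - ∫ x, fderiv ℝ φ x ξ * u₀ x := hB0
  have hgoal : (∫ x, |g x|) - δ ≤ ∫ x, |fderiv ℝ (u k) x ξ| := by
    have e1 : ∫ x, fderiv ℝ (u k) x ξ * φ x = - ∫ x, fderiv ℝ φ x ξ * u k x := hBk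
    linarith [step1, hA]
  exact hgoal

end Aux

/-- a uniform positive lower bound, over all directions ξ ∈ S^{n-1} and all
large indices k, for the directional gradient integrals of a sequence converging in L¹_loc
with bounded total variation to a limit with everywhere positive directional energy. -/
theorem uniform_directional_lower_bound {n : ℕ} (hn : 2 ≤ n)
    (u : ℕ → EuclideanSpace ℝ (Fin n) → ℝ) (u₀ : EuclideanSpace ℝ (Fin n) → ℝ)
    (hsm : ∀ k, ContDiff ℝ (⊤ : ℕ∞) (u k)) (hsupp : ∀ k, HasCompactSupport (u k))
    (hsm₀ : ContDiff ℝ (⊤ : ℕ∞) u₀) (hsupp₀ : HasCompactSupport u₀)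
    (hconv : ∀ K : Set (EuclideanSpace ℝ (Fin n)), IsCompact K →
      Tendsto (fun k => ∫ x in K, |u k x - u₀ x|) atTop (nhds 0))
    (hTV : ∃ C : ℝ, ∀ k, ∫ x, ‖fderiv ℝ (u k) x‖ ≤ C)
    (hpos : ∀ ξ ∈ Metric.sphere (0 : EuclideanSpace ℝ (Fin n)) 1,
      0 < ∫ x, |fderiv ℝ u₀ x ξ|) :
    ∃ c₀ > (0 : ℝ), ∃ k₀ : ℕ, ∀ k ≥ k₀, ∀ ξ ∈ Metric.sphere (0 : EuclideanSpace ℝ (Fin n)) 1,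
      c₀ ≤ ∫ x, |fderiv ℝ (u k) x ξ| := by
  classical
  obtain ⟨C, hC⟩ := hTV
  have hC0 : 0 ≤ C := le_trans (integral_nonneg fun x => norm_nonneg _) (hC 0)
  -- continuity of the limiting directional energy
  set F₀ : EuclideanSpace ℝ (Fin n) → ℝ := fun ξ => ∫ x, |fderiv ℝ u₀ x ξ| with hF₀_def
  set C₀ : ℝ := ∫ x, ‖fderiv ℝ u₀ x‖ with hC₀_def
  have hlip₀ : ∀ ξ η, |F₀ ξ - F₀ η| ≤ C₀ * ‖ξ - η‖ := by
    intro ξ η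
    rw [abs_le]
    constructor
    · have := F_lip hsm₀ hsupp₀ η ξ
      rw [norm_sub_rev] at this
      linarith
    · exact F_lip hsm₀ hsupp₀ ξ η
  have hcont₀ : Continuous F₀ := by
    have : LipschitzWith (Real.toNNReal C₀) F₀ := by
      refine LipschitzWith.of_dist_le_mul (fun ξ η => ?_)
      rw [Real.dist_eq, dist_eq_norm]
      exact le_trans (hlip₀ ξ η)
        (mul_le_mul_of_nonneg_right (Real.le_coe_toNNReal C₀) (norm_nonneg _))
    exact this.continuous
  -- sphere is compact and nonempty
  have hne : (Metric.sphere (0 : EuclideanSpace ℝ (Fin n)) 1).Nonempty := by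
    refine ⟨EuclideanSpace.single (⟨0, by omega⟩ : Fin n) (1 : ℝ), ?_⟩
    simp [EuclideanSpace.norm_single]
  obtain ⟨ξs, hξsmem, hmin'⟩ := (isCompact_sphere (0 : EuclideanSpace ℝ (Fin n)) 1).exists_isMinOn
    hne hcont₀.continuousOn
  have hmin : ∀ ζ ∈ Metric.sphere (0 : EuclideanSpace ℝ (Fin n)) 1, F₀ ξs ≤ F₀ ζ :=
    fun ζ hζ => hmin' hζ
  set m : ℝ := F₀ ξs with hm_def
  have hm : 0 < m := hpos _ hξsmem
  -- finite net
  set δ : ℝ := (m / 4) / (C + 1) with hδ_def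
  have hδpos : 0 < δ := by positivity
  obtain ⟨t, ht⟩ := (isCompact_sphere (0 : EuclideanSpace ℝ (Fin n)) 1).elim_finite_subcover
    (fun ξ : Metric.sphere (0 : EuclideanSpace ℝ (Fin n)) 1 =>
      Metric.ball (ξ : EuclideanSpace ℝ (Fin n)) δ)
    (fun _ => Metric.isOpen_ball)
    (fun ξ hξ => Set.mem_iUnion.mpr ⟨⟨ξ, hξ⟩, Metric.mem_ball_self hδpos⟩)
  -- eventual lower bound on the net
  have hev : ∀ᶠ k in atTop, ∀ i ∈ t,
      F₀ (i : EuclideanSpace ℝ (Fin n)) - m / 4 ≤ ∫ x, |fderiv ℝ (u k) x (i : EuclideanSpace ℝ (Fin n))| :=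
    (eventually_all_finset t).mpr fun i _ =>
      key_liminf u u₀ hsm hsupp hsm₀ hsupp₀ hconv (i : EuclideanSpace ℝ (Fin n)) (by positivity)
  obtain ⟨k₀, hk₀⟩ := eventually_atTop.mp hev
  refine ⟨m / 2, by positivity, k₀, fun k hk ξ hξ => ?_⟩
  obtain ⟨i, hit, hξi⟩ : ∃ i ∈ t, ξ ∈ Metric.ball (i : EuclideanSpace ℝ (Fin n)) δ := by
    have := ht hξ
    simpa using this
  have h1 : F₀ (i : EuclideanSpace ℝ (Fin n)) - m / 4
      ≤ ∫ x, |fderiv ℝ (u k) x (i : EuclideanSpace ℝ (Fin n))| := hk₀ k hk i hit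
  have h2 : m ≤ F₀ (i : EuclideanSpace ℝ (Fin n)) := hmin _ i.2
  have h3 : (∫ x, |fderiv ℝ (u k) x (i : EuclideanSpace ℝ (Fin n))|)
      - (∫ x, |fderiv ℝ (u k) x ξ|)
      ≤ (∫ x, ‖fderiv ℝ (u k) x‖) * ‖(i : EuclideanSpace ℝ (Fin n)) - ξ‖ :=
    F_lip (hsm k) (hsupp k) _ _
  have hdist : ‖(i : EuclideanSpace ℝ (Fin n)) - ξ‖ ≤ δ := by
    rw [norm_sub_rev, ← dist_eq_norm]
    exact le_of_lt (Metric.mem_ball.mp hξi)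
  have h4 : (∫ x, ‖fderiv ℝ (u k) x‖) * ‖(i : EuclideanSpace ℝ (Fin n)) - ξ‖ ≤ C * δ :=
    mul_le_mul (hC k) hdist (norm_nonneg _) hC0
  have h5 : C * δ ≤ m / 4 := by
    rw [hδ_def]
    have h6 : C * (m / 4 / (C + 1)) ≤ (C + 1) * (m / 4 / (C + 1)) := by nlinarith
    have h7 : (C + 1) * (m / 4 / (C + 1)) = m / 4 := by field_simp
    linarith
  linarith
end

section
/- Let n ≥ 2 and let 1 ≤ q ≤ n/(n−1). There exists a constant C > 0, depending only on n and q, such that for every smooth compactly supported function u : ℝⁿ → ℝ, ∫_{ℝⁿ} |u|^q dx ≤ C (‖u‖_{L¹(ℝⁿ)} + ‖∇u‖_{L¹(ℝⁿ)}) · sup_{y ∈ ℤⁿ} (∫_{y + Q} |u|^q dx)^{1 − 1/q}, where Q = (0,1)ⁿ is the open unit cube and y + Q its translate by the integer vector y. -/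
open MeasureTheory

noncomputable section

/-- The translate of the open unit cube Q = (0,1)ⁿ by the integer vector y. -/
def cubeTranslate {n : ℕ} (y : Fin n → ℤ) : Set (EuclideanSpace ℝ (Fin n)) :=
  {x | ∀ i, x i ∈ Set.Ioo ((y i : ℝ)) ((y i : ℝ) + 1)}

open scoped ENNReal NNReal

variable {n : ℕ}

def latticePt (y : Fin n → ℤ) : EuclideanSpace ℝ (Fin n) := WithLp.toLp 2 (fun i => (y i : ℝ))
def cubeCenter (n : ℕ) : EuclideanSpace ℝ (Fin n) := WithLp.toLp 2 (fun _ => (1/2 : ℝ))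
def bigBall (y : Fin n → ℤ) : Set (EuclideanSpace ℝ (Fin n)) :=
  Metric.closedBall (cubeCenter n + latticePt y) ((n : ℝ) + 1)
def theBump (hn : 0 < n) : ContDiffBump (cubeCenter n) :=
  { rIn := n, rOut := n + 1, rIn_pos := by exact_mod_cast hn, rIn_lt_rOut := by linarith }
def bumpAt (hn : 0 < n) (y : Fin n → ℤ) : EuclideanSpace ℝ (Fin n) → ℝ :=
  fun x => theBump hn (x - latticePt y)

lemma coord_abs_le_norm (w : EuclideanSpace ℝ (Fin n)) (i : Fin n) :
    |w i| ≤ ‖w‖ := by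
  rw [EuclideanSpace.norm_eq]
  rw [← Real.sqrt_sq (abs_nonneg (w i))]
  apply Real.sqrt_le_sqrt
  rw [sq_abs]
  have h : ∀ j ∈ Finset.univ, (0:ℝ) ≤ ‖w j‖^2 := fun j _ => sq_nonneg _
  calc w i ^ 2 = ‖w i‖ ^ 2 := by rw [Real.norm_eq_abs, sq_abs]
  _ ≤ ∑ j, ‖w j‖ ^ 2 := Finset.single_le_sum h (Finset.mem_univ i)

lemma cube_eq_preimage {n : ℕ} (y : Fin n → ℤ) :
    cubeTranslate y = (MeasurableEquiv.toLp 2 (Fin n → ℝ)).symm ⁻¹'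
      (Set.univ.pi fun i => Set.Ioo ((y i : ℝ)) ((y i : ℝ) + 1)) := by
  ext x
  simp [cubeTranslate, Set.mem_pi, MeasurableEquiv.coe_toLp_symm]


lemma cube_measurable {n : ℕ} (y : Fin n → ℤ) : MeasurableSet (cubeTranslate y) := by
  rw [cube_eq_preimage]
  exact (MeasurableEquiv.toLp 2 (Fin n → ℝ)).symm.measurable
    (MeasurableSet.univ_pi fun i => measurableSet_Ioo)

lemma cube_volume {n : ℕ} (y : Fin n → ℤ) : volume (cubeTranslate y) = 1 := by
  rw [cube_eq_preimage,
    (EuclideanSpace.volume_preserving_symm_measurableEquiv_toLp (Fin n)).measure_preimage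
      (MeasurableSet.univ_pi fun i => measurableSet_Ioo).nullMeasurableSet]
  rw [volume_pi_pi]
  simp

lemma cube_disjoint {n : ℕ} : Pairwise (Function.onFun Disjoint (fun y : Fin n → ℤ => cubeTranslate y)) := by
  intro y y' hyy
  rw [Function.onFun, Set.disjoint_left]
  intro x hx hx'
  apply hyy
  funext i
  have h1 := hx i
  have h2 := hx' i
  simp only [Set.mem_Ioo] at h1 h2
  have e1 : y i = ⌊x i⌋ := by
    symm; rw [Int.floor_eq_iff]; exact ⟨h1.1.le, h1.2⟩
  have e2 : y' i = ⌊x i⌋ := by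
    symm; rw [Int.floor_eq_iff]; exact ⟨h2.1.le, h2.2⟩
  rw [e1, e2]

lemma hyperplane_null {n : ℕ} (hn : 1 ≤ n) (i : Fin n) (k : ℤ) :
    volume {x : EuclideanSpace ℝ (Fin n) | x i = (k:ℝ)} = 0 := by
  have : {x : EuclideanSpace ℝ (Fin n) | x i = (k:ℝ)} =
      (MeasurableEquiv.toLp 2 (Fin n → ℝ)).symm ⁻¹'
        (Set.univ.pi fun j => if j = i then {(k:ℝ)} else Set.univ) := by
    ext x
    simp only [Set.mem_preimage, Set.mem_pi, Set.mem_univ, forall_true_left, Set.mem_setOf_eq]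
    constructor
    · intro h j; by_cases hj : j = i <;> simp [hj, h, MeasurableEquiv.coe_toLp_symm]
    · intro h
      have := h i
      simp only [if_pos rfl] at this
      simpa [MeasurableEquiv.coe_toLp_symm] using this
  rw [this,
    (EuclideanSpace.volume_preserving_symm_measurableEquiv_toLp (Fin n)).measure_preimage
      (MeasurableSet.univ_pi fun j => by
        by_cases hj : j = i <;> simp [hj]).nullMeasurableSet]
  rw [volume_pi_pi]
  apply Finset.prod_eq_zero (Finset.mem_univ i)
  simp

lemma cube_cover_ae {n : ℕ} (hn : 1 ≤ n) :
    volume (⋃ y : Fin n → ℤ, cubeTranslate y)ᶜ = 0 := by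
  have hsub : (⋃ y : Fin n → ℤ, cubeTranslate y)ᶜ ⊆
      ⋃ i : Fin n, ⋃ k : ℤ, {x : EuclideanSpace ℝ (Fin n) | x i = (k:ℝ)} := by
    intro x hx
    by_contra hmem
    simp only [Set.mem_iUnion, not_exists, Set.mem_setOf_eq] at hmem
    apply hx
    refine Set.mem_iUnion.2 ⟨fun i => ⌊x i⌋, fun i => ?_⟩
    constructor
    · rcases lt_or_eq_of_le (Int.floor_le (x i)) with h | h
      · exact h
      · exact absurd h.symm (hmem i ⌊x i⌋)
    · exact Int.lt_floor_add_one (x i)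
  refine measure_mono_null hsub ?_
  refine measure_iUnion_null fun i => measure_iUnion_null fun k => hyperplane_null hn i k

lemma counting (x : EuclideanSpace ℝ (Fin n)) :
    ∑' y : Fin n → ℤ, (bigBall y).indicator (fun _ => (1:ℝ≥0∞)) x ≤ ((2*n+3 : ℕ) : ℝ≥0∞)^n := by
  classical
  set F : Finset (Fin n → ℤ) :=
    Fintype.piFinset (fun i => Finset.Icc ⌈x i - 1/2 - ((n:ℝ)+1)⌉ ⌊x i - 1/2 + ((n:ℝ)+1)⌋) with hF
  have hmem : ∀ y : Fin n → ℤ, x ∈ bigBall y → y ∈ F := by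
    intro y hy
    rw [hF, Fintype.mem_piFinset]
    intro i
    rw [bigBall, Metric.mem_closedBall, dist_eq_norm] at hy
    have hcoord : |(x - (cubeCenter n + latticePt y)) i| ≤ (n:ℝ)+1 :=
      le_trans (coord_abs_le_norm _ i) hy
    have : (x - (cubeCenter n + latticePt y)) i = x i - (1/2 + (y i : ℝ)) := by
      simp [cubeCenter, latticePt]
    rw [this, abs_le] at hcoord
    rw [Finset.mem_Icc]
    constructor
    · rw [Int.ceil_le]; linarith [hcoord.2]
    · rw [Int.le_floor]; linarith [hcoord.1]
  have hzero : ∀ y ∉ F, (bigBall y).indicator (fun _ => (1:ℝ≥0∞)) x = 0 := by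
    intro y hy
    rw [Set.indicator_apply_eq_zero]
    intro hx
    exact absurd (hmem y hx) hy
  rw [tsum_eq_sum hzero]
  calc ∑ y ∈ F, (bigBall y).indicator (fun _ => (1:ℝ≥0∞)) x
      ≤ ∑ _y ∈ F, (1:ℝ≥0∞) := Finset.sum_le_sum (fun y _ => Set.indicator_apply_le (fun _ => le_rfl))
    _ = F.card := by simp
    _ ≤ ((2*n+3 : ℕ) : ℝ≥0∞)^n := by
        norm_cast
        rw [hF, Fintype.card_piFinset]
        calc ∏ i, (Finset.Icc ⌈x i - 1/2 - ((n:ℝ)+1)⌉ ⌊x i - 1/2 + ((n:ℝ)+1)⌋).card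
            ≤ ∏ _i : Fin n, (2*n+3) := by
              apply Finset.prod_le_prod (fun _ _ => Nat.zero_le _)
              intro i _
              rw [Int.card_Icc]
              have hle : (⌊x i - 1/2 + ((n:ℝ)+1)⌋ + 1 - ⌈x i - 1/2 - ((n:ℝ)+1)⌉ : ℤ) ≤ (2*n+3 : ℤ) := by
                have h1 : (⌊x i - 1/2 + ((n:ℝ)+1)⌋ : ℝ) ≤ x i - 1/2 + ((n:ℝ)+1) := Int.floor_le _
                have h2 : (x i - 1/2 - ((n:ℝ)+1)) ≤ (⌈x i - 1/2 - ((n:ℝ)+1)⌉ : ℝ) := Int.le_ceil _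
                have : ((⌊x i - 1/2 + ((n:ℝ)+1)⌋ + 1 - ⌈x i - 1/2 - ((n:ℝ)+1)⌉ : ℤ) : ℝ)
                    ≤ (2*(n:ℝ)+3 : ℝ) := by push_cast; linarith
                exact_mod_cast this
              calc (⌊x i - 1/2 + ((n:ℝ)+1)⌋ + 1 - ⌈x i - 1/2 - ((n:ℝ)+1)⌉ : ℤ).toNat
                  ≤ (2*n+3 : ℤ).toNat := Int.toNat_le_toNat hle
                _ = 2*n+3 := by omega
          _ = (2*n+3)^n := by simp [Finset.prod_const]

lemma bumpAt_smooth (hn : 0 < n) (y : Fin n → ℤ) : ContDiff ℝ 1 (bumpAt hn y) := by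
  have h := ((theBump hn).contDiff (n := 1)).comp
    ((contDiff_id.sub contDiff_const : ContDiff ℝ 1 fun x : EuclideanSpace ℝ (Fin n) => x - latticePt y))
  exact_mod_cast h

lemma norm_le_of_coord {w : EuclideanSpace ℝ (Fin n)} {a : ℝ} (ha : 0 ≤ a)
    (h : ∀ i, |w i| ≤ a) : ‖w‖ ≤ Real.sqrt n * a := by
  rw [EuclideanSpace.norm_eq]
  have : ∑ i, ‖w i‖ ^ 2 ≤ (n : ℝ) * a ^ 2 := by
    calc ∑ i, ‖w i‖ ^ 2 ≤ ∑ _i : Fin n, a ^ 2 := by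
          apply Finset.sum_le_sum
          intro i _
          rw [Real.norm_eq_abs]
          exact pow_le_pow_left₀ (abs_nonneg _) (h i) 2
      _ = (n : ℝ) * a ^ 2 := by simp [Finset.sum_const, mul_comm]
  calc Real.sqrt (∑ i, ‖w i‖ ^ 2) ≤ Real.sqrt ((n:ℝ) * a ^ 2) := Real.sqrt_le_sqrt this
    _ = Real.sqrt n * a := by
        rw [Real.sqrt_mul (Nat.cast_nonneg n), Real.sqrt_sq ha]

lemma sqrt_n_le (hn : 0 < n) : Real.sqrt n ≤ (n : ℝ) := by
  have h1 : (1:ℝ) ≤ (n:ℝ) := by exact_mod_cast hn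
  have h2 : (n:ℝ) ≤ (n:ℝ)^2 := by nlinarith
  calc Real.sqrt n ≤ Real.sqrt ((n:ℝ)^2) := Real.sqrt_le_sqrt h2
    _ = (n:ℝ) := Real.sqrt_sq (Nat.cast_nonneg n)

lemma bumpAt_one (hn : 0 < n) (y : Fin n → ℤ) {x : EuclideanSpace ℝ (Fin n)}
    (hx : x ∈ cubeTranslate y) : bumpAt hn y x = 1 := by
  apply (theBump hn).one_of_mem_closedBall
  rw [Metric.mem_closedBall, dist_eq_norm]
  have hcoord : ∀ i, |(x - latticePt y - cubeCenter n) i| ≤ 1 := by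
    intro i
    have h1 := hx i
    simp only [Set.mem_Ioo] at h1
    have : (x - latticePt y - cubeCenter n) i = x i - (y i : ℝ) - 1/2 := by
      simp [latticePt, cubeCenter]
    rw [this, abs_le]
    constructor <;> [linarith [h1.1]; linarith [h1.2]]
  calc ‖x - latticePt y - cubeCenter n‖ ≤ Real.sqrt n * 1 := norm_le_of_coord zero_le_one hcoord
    _ ≤ (n : ℝ) := by rw [mul_one]; exact sqrt_n_le hn
    _ = (theBump hn).rIn := rfl

lemma bumpAt_nonneg (hn : 0 < n) (y : Fin n → ℤ) (x : EuclideanSpace ℝ (Fin n)) :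
    0 ≤ bumpAt hn y x := (theBump hn).nonneg

lemma bumpAt_le_one (hn : 0 < n) (y : Fin n → ℤ) (x : EuclideanSpace ℝ (Fin n)) :
    bumpAt hn y x ≤ 1 := (theBump hn).le_one

lemma bumpAt_zero (hn : 0 < n) (y : Fin n → ℤ) {x : EuclideanSpace ℝ (Fin n)}
    (hx : x ∉ bigBall y) : bumpAt hn y x = 0 := by
  apply (theBump hn).zero_of_le_dist
  rw [bigBall, Metric.mem_closedBall, not_le] at hx
  rw [dist_eq_norm]
  rw [dist_eq_norm] at hx
  have : x - (cubeCenter n + latticePt y) = x - latticePt y - cubeCenter n := by abel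
  rw [this] at hx
  exact le_of_lt hx

lemma bumpAt_fderiv (hn : 0 < n) (y : Fin n → ℤ) (x : EuclideanSpace ℝ (Fin n)) :
    fderiv ℝ (bumpAt hn y) x = fderiv ℝ (theBump hn) (x - latticePt y) := by
  have h1 : bumpAt hn y = (theBump hn) ∘ (fun x => x - latticePt y) := rfl
  rw [h1, fderiv_comp x (((theBump hn).contDiff (n := 1)).differentiable one_ne_zero).differentiableAt (differentiableAt_fun_id.sub_const _)]
  have : fderiv ℝ (fun x : EuclideanSpace ℝ (Fin n) => x - latticePt y) x =
      ContinuousLinearMap.id ℝ _ := by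
    rw [fderiv_sub_const, fderiv_id']
  rw [this, ContinuousLinearMap.comp_id]

lemma bumpAt_fderiv_bound (hn : 0 < n) : ∃ K : ℝ≥0, ∀ (y : Fin n → ℤ) (x : EuclideanSpace ℝ (Fin n)),
    ‖fderiv ℝ (bumpAt hn y) x‖₊ ≤ K := by
  obtain ⟨K, hK⟩ := ((theBump hn).hasCompactSupport.fderiv (𝕜 := ℝ)).exists_bound_of_continuous
    (((theBump hn).contDiff (n := 1)).continuous_fderiv one_ne_zero)
  refine ⟨Real.toNNReal K, fun y x => ?_⟩
  rw [← NNReal.coe_le_coe]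
  simp only [coe_nnnorm]
  rw [bumpAt_fderiv]
  exact le_trans (hK _) (le_max_left _ _)

lemma fderiv_mul_bump_bound (hn : 0 < n) {u : EuclideanSpace ℝ (Fin n) → ℝ}
    (hu1 : ContDiff ℝ 1 u) {K : ℝ≥0}
    (hK : ∀ (y : Fin n → ℤ) (x : EuclideanSpace ℝ (Fin n)), ‖fderiv ℝ (bumpAt hn y) x‖₊ ≤ K)
    (y : Fin n → ℤ) (x : EuclideanSpace ℝ (Fin n)) :
    (‖fderiv ℝ (fun z => u z * bumpAt hn y z) x‖₊ : ℝ≥0∞) ≤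
      (bigBall y).indicator (fun z => (K : ℝ≥0∞) * ‖u z‖₊ + ‖fderiv ℝ u z‖₊) x := by
  by_cases hx : x ∈ bigBall y
  · rw [Set.indicator_of_mem hx]
    rw [fderiv_fun_mul (hu1.differentiable one_ne_zero).differentiableAt
      ((bumpAt_smooth hn y).differentiable one_ne_zero).differentiableAt]
    calc (‖u x • fderiv ℝ (bumpAt hn y) x + bumpAt hn y x • fderiv ℝ u x‖₊ : ℝ≥0∞)
        ≤ (‖u x • fderiv ℝ (bumpAt hn y) x‖₊ : ℝ≥0∞) + ‖bumpAt hn y x • fderiv ℝ u x‖₊ := by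
          exact_mod_cast nnnorm_add_le _ _
      _ = (‖u x‖₊ : ℝ≥0∞) * ‖fderiv ℝ (bumpAt hn y) x‖₊
          + (‖bumpAt hn y x‖₊ : ℝ≥0∞) * ‖fderiv ℝ u x‖₊ := by
          rw [nnnorm_smul, nnnorm_smul]; push_cast; ring
      _ ≤ (‖u x‖₊ : ℝ≥0∞) * (K : ℝ≥0∞) + 1 * ‖fderiv ℝ u x‖₊ := by
          gcongr
          · exact_mod_cast hK y x
          · have h1 : ‖bumpAt hn y x‖₊ ≤ 1 := by
              rw [← NNReal.coe_le_coe, coe_nnnorm, Real.norm_eq_abs,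
                abs_of_nonneg (bumpAt_nonneg hn y x)]
              exact bumpAt_le_one hn y x
            exact_mod_cast h1
      _ = (K : ℝ≥0∞) * ‖u x‖₊ + ‖fderiv ℝ u x‖₊ := by ring
  · have hopen : IsOpen (bigBall y)ᶜ := Metric.isClosed_closedBall.isOpen_compl
    have hev : (fun z => u z * bumpAt hn y z) =ᶠ[nhds x] (fun _ => (0:ℝ)) := by
      filter_upwards [hopen.mem_nhds hx] with z hz
      rw [bumpAt_zero hn y hz, mul_zero]
    rw [hev.fderiv_eq, fderiv_const_apply]
    simp [Set.indicator]

lemma per_cube_bound (hn2 : 2 ≤ n) {u : EuclideanSpace ℝ (Fin n) → ℝ}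
    (hu1 : ContDiff ℝ 1 u) (h2u : HasCompactSupport u)
    {q : ℝ} (hq1 : 1 ≤ q) (hq2 : q ≤ (n : ℝ) / ((n : ℝ) - 1))
    {K : ℝ≥0}
    (hK : ∀ (y : Fin n → ℤ) (x : EuclideanSpace ℝ (Fin n)), ‖fderiv ℝ (bumpAt (by omega) y) x‖₊ ≤ K)
    (y : Fin n → ℤ) :
    (∫⁻ x in cubeTranslate y, (‖u x‖₊ : ℝ≥0∞) ^ q) ^ (1/q) ≤
      (eLpNormLESNormFDerivOneConst (volume : Measure (EuclideanSpace ℝ (Fin n)))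
          (NNReal.conjExponent n) : ℝ≥0∞) *
        ∫⁻ x, (bigBall y).indicator (fun z => (K : ℝ≥0∞) * ‖u z‖₊ + ‖fderiv ℝ u z‖₊) x := by
  have hn : 0 < n := by omega
  set p' : ℝ≥0 := NNReal.conjExponent n with hp'
  have hq0 : (0:ℝ) < q := lt_of_lt_of_le one_pos hq1
  set ν := volume.restrict (cubeTranslate y) with hν
  set uφ : EuclideanSpace ℝ (Fin n) → ℝ := fun z => u z * bumpAt hn y z with huφ
  have h1n : (1 : ℝ≥0) < (n : ℝ≥0) := by exact_mod_cast hn2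
  have hconj : NNReal.HolderConjugate (n : ℝ≥0) p' := NNReal.HolderConjugate.conjExponent h1n
  -- step 0: A^{1/q} = eLpNorm u (ofReal q) ν
  have hofq0 : (ENNReal.ofReal q) ≠ 0 := by
    simp [ENNReal.ofReal_eq_zero, not_le, hq0]
  have step0 : (∫⁻ x in cubeTranslate y, (‖u x‖₊ : ℝ≥0∞) ^ q) ^ (1/q)
      = eLpNorm u (ENNReal.ofReal q) ν := by
    rw [eLpNorm_eq_lintegral_rpow_enorm_toReal hofq0 ENNReal.ofReal_ne_top,
      ENNReal.toReal_ofReal hq0.le]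
    rfl
  -- step 1: eLpNorm u (ofReal q) ν ≤ eLpNorm u p' ν
  have hqle : ENNReal.ofReal q ≤ (p' : ℝ≥0∞) := by
    apply ENNReal.ofReal_le_of_le_toReal
    rw [ENNReal.coe_toReal]
    have : (p' : ℝ) = (n : ℝ) / ((n : ℝ) - 1) := by
      rw [hp', NNReal.conjExponent, NNReal.coe_div, NNReal.coe_sub (by exact_mod_cast hn)]
      norm_num
    rw [this]; exact hq2
  have humeas : AEStronglyMeasurable u ν := hu1.continuous.aestronglyMeasurable.restrict
  have step1 : eLpNorm u (ENNReal.ofReal q) ν ≤ eLpNorm u (p' : ℝ≥0∞) ν := by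
    have h := eLpNorm_le_eLpNorm_mul_rpow_measure_univ hqle humeas
    rwa [Measure.restrict_apply_univ, cube_volume, ENNReal.one_rpow, mul_one] at h
  -- step 2: = eLpNorm uφ p' ν
  have step2 : eLpNorm u (p' : ℝ≥0∞) ν = eLpNorm uφ (p' : ℝ≥0∞) ν := by
    apply eLpNorm_congr_ae
    filter_upwards [self_mem_ae_restrict (cube_measurable y)] with x hx
    rw [huφ]
    simp only
    rw [bumpAt_one hn y hx, mul_one]
  -- step 3: ≤ eLpNorm uφ p' volume
  have step3 : eLpNorm uφ (p' : ℝ≥0∞) ν ≤ eLpNorm uφ (p' : ℝ≥0∞) volume :=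
    eLpNorm_mono_measure _ Measure.restrict_le_self
  -- step 4: Sobolev
  have hcduφ : ContDiff ℝ 1 uφ := hu1.mul (bumpAt_smooth hn y)
  have hcsuφ : HasCompactSupport uφ := h2u.mul_right
  have hfr : NNReal.HolderConjugate (Module.finrank ℝ (EuclideanSpace ℝ (Fin n))) p' := by
    rw [finrank_euclideanSpace_fin]; exact hconj
  have step4 : eLpNorm uφ (p' : ℝ≥0∞) volume ≤
      (eLpNormLESNormFDerivOneConst (volume : Measure (EuclideanSpace ℝ (Fin n))) p' : ℝ≥0∞) *
        eLpNorm (fderiv ℝ uφ) 1 volume :=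
    eLpNorm_le_eLpNorm_fderiv_one volume hcduφ hcsuφ hfr
  -- step 5: eLpNorm fderiv ≤ lintegral indicator
  have step5 : eLpNorm (fderiv ℝ uφ) 1 volume ≤
      ∫⁻ x, (bigBall y).indicator (fun z => (K : ℝ≥0∞) * ‖u z‖₊ + ‖fderiv ℝ u z‖₊) x := by
    rw [eLpNorm_one_eq_lintegral_enorm]
    exact lintegral_mono (fun x => fderiv_mul_bump_bound hn hu1 hK y x)
  calc (∫⁻ x in cubeTranslate y, (‖u x‖₊ : ℝ≥0∞) ^ q) ^ (1/q)
      = eLpNorm u (ENNReal.ofReal q) ν := step0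
    _ ≤ eLpNorm u (p' : ℝ≥0∞) ν := step1
    _ = eLpNorm uφ (p' : ℝ≥0∞) ν := step2
    _ ≤ eLpNorm uφ (p' : ℝ≥0∞) volume := step3
    _ ≤ _ := le_trans step4 (by gcongr)

/-- a cube-decomposition estimate: the L^q norm (to the q-th power) of u is
controlled by its W^{1,1} norm times the supremum over integer translates of the unit cube
of the local L^q integrals raised to the power 1 − 1/q. -/
theorem cube_decomposition_estimate {n : ℕ} (hn : 2 ≤ n)
    (q : ℝ) (hq1 : 1 ≤ q) (hq2 : q ≤ (n : ℝ) / ((n : ℝ) - 1)) :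
    ∃ C > (0 : ℝ), ∀ u : EuclideanSpace ℝ (Fin n) → ℝ,
      ContDiff ℝ (⊤ : ℕ∞) u → HasCompactSupport u →
      (∫ x, |u x| ^ q) ≤
        C * ((∫ x, |u x|) + (∫ x, ‖fderiv ℝ u x‖)) *
          ⨆ y : Fin n → ℤ, (∫ x in cubeTranslate y, |u x| ^ q) ^ (1 - 1 / q) := by
  have hn0 : 0 < n := by omega
  have hq0 : (0:ℝ) < q := lt_of_lt_of_le one_pos hq1
  have h1q : 1/q ≤ 1 := by rw [div_le_one hq0]; exact hq1
  have hexp : (0:ℝ) ≤ 1 - 1/q := by linarith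
  obtain ⟨K, hK⟩ := bumpAt_fderiv_bound hn0
  set C₁ : ℝ≥0 := eLpNormLESNormFDerivOneConst (volume : Measure (EuclideanSpace ℝ (Fin n)))
    (NNReal.conjExponent n) with hC₁
  set M : ℝ≥0∞ := ((2*n+3 : ℕ) : ℝ≥0∞)^n with hM
  have hMne : M ≠ ⊤ := by
    rw [hM]; exact ENNReal.pow_ne_top (ENNReal.natCast_ne_top _)
  refine ⟨(C₁ : ℝ) * M.toReal * ((K:ℝ)+1) + 1, by positivity, ?_⟩
  intro u hu h2u
  have hu1 : ContDiff ℝ 1 u := hu.of_le (by simp)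
  have hucont : Continuous u := hu1.continuous
  have hfd_cont : Continuous (fderiv ℝ u) := hu.continuous_fderiv (by simp)
  have hfd_cs : HasCompactSupport (fderiv ℝ u) := h2u.fderiv (𝕜 := ℝ)
  -- integrability
  have hg_cont : Continuous (fun x => |u x| ^ q) :=
    (hucont.abs).rpow_const (fun x => Or.inr hq0.le)
  have hg_cs : HasCompactSupport (fun x => |u x| ^ q) :=
    h2u.comp_left (g := fun t : ℝ => |t| ^ q) (by simp [Real.zero_rpow hq0.ne'])
  have hg_int : Integrable (fun x => |u x| ^ q) :=
    hg_cont.integrable_of_hasCompactSupport hg_cs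
  have hu_int : Integrable u := hucont.integrable_of_hasCompactSupport h2u
  have hfd_int : Integrable (fun x => ‖fderiv ℝ u x‖) :=
    hfd_cont.norm.integrable_of_hasCompactSupport hfd_cs.norm
  -- lintegrals
  set L : ℝ≥0∞ := ∫⁻ x, (‖u x‖₊ : ℝ≥0∞) with hL
  set D : ℝ≥0∞ := ∫⁻ x, (‖fderiv ℝ u x‖₊ : ℝ≥0∞) with hD
  set G : ℝ≥0∞ := ∫⁻ x, (‖u x‖₊ : ℝ≥0∞) ^ q with hG
  set A : (Fin n → ℤ) → ℝ≥0∞ := fun y => ∫⁻ x in cubeTranslate y, (‖u x‖₊ : ℝ≥0∞) ^ q with hA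
  have hLne : L ≠ ⊤ := hu_int.hasFiniteIntegral.ne
  have hDne : D ≠ ⊤ := by
    have h := hfd_int.hasFiniteIntegral
    rw [HasFiniteIntegral] at h
    simp only [enorm_norm] at h
    exact h.ne
  have hpt : ∀ x : EuclideanSpace ℝ (Fin n), (‖u x‖₊ : ℝ≥0∞) ^ q = (‖(|u x| ^ q : ℝ)‖₊ : ℝ≥0∞) := by
    intro x
    rw [← ENNReal.coe_rpow_of_nonneg _ hq0.le]
    congr 1
    ext
    rw [coe_nnnorm, NNReal.coe_rpow, coe_nnnorm, Real.norm_eq_abs, Real.norm_eq_abs,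
      abs_of_nonneg (Real.rpow_nonneg (abs_nonneg _) q)]
  have hGne : G ≠ ⊤ := by
    have h := hg_int.hasFiniteIntegral
    rw [HasFiniteIntegral] at h
    rw [hG]
    simp_rw [hpt]
    exact h.ne
  -- real integral conversions
  have hofr : ∀ x : EuclideanSpace ℝ (Fin n), ENNReal.ofReal (|u x| ^ q) = (‖u x‖₊ : ℝ≥0∞) ^ q := by
    intro x
    rw [← enorm_eq_nnnorm, ← ofReal_norm, Real.norm_eq_abs,
      ENNReal.ofReal_rpow_of_nonneg (abs_nonneg _) hq0.le]
  have hIg : (∫ x, |u x| ^ q) = G.toReal := by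
    rw [integral_eq_lintegral_of_nonneg_ae (Filter.Eventually.of_forall fun x => by positivity)
      hg_cont.aestronglyMeasurable]
    congr 1
    exact lintegral_congr hofr
  have hIl : (∫ x, |u x|) = L.toReal := by
    rw [integral_eq_lintegral_of_nonneg_ae (Filter.Eventually.of_forall fun x => abs_nonneg _)
      hucont.abs.aestronglyMeasurable]
    congr 1
    apply lintegral_congr
    intro x
    rw [← Real.norm_eq_abs, ofReal_norm, enorm_eq_nnnorm]
  have hId : (∫ x, ‖fderiv ℝ u x‖) = D.toReal := by
    rw [integral_eq_lintegral_of_nonneg_ae (Filter.Eventually.of_forall fun x => norm_nonneg _)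
      hfd_cont.norm.aestronglyMeasurable]
    congr 1
    apply lintegral_congr
    intro x
    rw [ofReal_norm, enorm_eq_nnnorm]
  have hIA : ∀ y : Fin n → ℤ, (∫ x in cubeTranslate y, |u x| ^ q) = (A y).toReal := by
    intro y
    rw [integral_eq_lintegral_of_nonneg_ae (Filter.Eventually.of_forall fun x => by positivity)
      hg_cont.aestronglyMeasurable.restrict]
    congr 1
    exact lintegral_congr hofr
  -- the sup
  set T : ℝ := ⨆ y : Fin n → ℤ, (∫ x in cubeTranslate y, |u x| ^ q) ^ (1 - 1/q) with hT
  have hAleG : ∀ y, A y ≤ G := fun y => setLIntegral_le_lintegral _ _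
  have hbdd : BddAbove (Set.range fun y : Fin n → ℤ =>
      (∫ x in cubeTranslate y, |u x| ^ q) ^ (1 - 1/q)) := by
    refine ⟨G.toReal ^ (1 - 1/q), ?_⟩
    rintro t ⟨y, rfl⟩
    dsimp only
    rw [hIA y]
    exact Real.rpow_le_rpow ENNReal.toReal_nonneg (ENNReal.toReal_mono hGne (hAleG y)) hexp
  have hTy : ∀ y : Fin n → ℤ, (∫ x in cubeTranslate y, |u x| ^ q) ^ (1 - 1/q) ≤ T :=
    fun y => le_ciSup hbdd y
  have hT0 : 0 ≤ T :=
    Real.iSup_nonneg fun y => Real.rpow_nonneg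
      (integral_nonneg fun x => by positivity) _
  -- step 2
  have step2 : ∀ y : Fin n → ℤ, A y ≤ ENNReal.ofReal T * (A y) ^ (1/q) := by
    intro y
    by_cases hA0 : A y = 0
    · rw [hA0]; exact zero_le
    · have hAne : A y ≠ ⊤ := (lt_of_le_of_lt (hAleG y) (lt_top_iff_ne_top.2 hGne)).ne
      have hsplit : A y = (A y) ^ (1 - 1/q) * (A y) ^ (1/q) := by
        rw [← ENNReal.rpow_add _ _ hA0 hAne, sub_add_cancel, ENNReal.rpow_one]
      conv_lhs => rw [hsplit]
      apply mul_le_mul_left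
      rw [ENNReal.le_ofReal_iff_toReal_le (by
          exact ENNReal.rpow_ne_top_of_nonneg hexp hAne) hT0]
      rw [← ENNReal.toReal_rpow]
      rw [← hIA y]
      exact hTy y
  -- cover
  have hcover : G = ∑' y : Fin n → ℤ, A y := by
    have hU : MeasurableSet (⋃ y : Fin n → ℤ, cubeTranslate y) :=
      MeasurableSet.iUnion fun y => cube_measurable y
    have h0 : (∫⁻ x in (⋃ y : Fin n → ℤ, cubeTranslate y)ᶜ, (‖u x‖₊ : ℝ≥0∞) ^ q) = 0 :=
      setLIntegral_measure_zero _ _ (cube_cover_ae (by omega))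
    have h1 := lintegral_add_compl (fun x => (‖u x‖₊ : ℝ≥0∞) ^ q) hU (μ := volume)
    rw [h0, add_zero] at h1
    rw [hG, ← h1, lintegral_iUnion (fun y => cube_measurable y) cube_disjoint]
  -- measurability of h
  set h : EuclideanSpace ℝ (Fin n) → ℝ≥0∞ :=
    fun z => (K : ℝ≥0∞) * ‖u z‖₊ + ‖fderiv ℝ u z‖₊ with hh
  have hmeas_h : Measurable h :=
    (measurable_const.mul (hucont.measurable.nnnorm.coe_nnreal_ennreal)).add
      (hfd_cont.measurable.nnnorm.coe_nnreal_ennreal)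
  -- main chain in ℝ≥0∞
  have main : G ≤ ENNReal.ofReal T * ((C₁ : ℝ≥0∞) * (M * ((K : ℝ≥0∞) * L + D))) := by
    calc G = ∑' y : Fin n → ℤ, A y := hcover
      _ ≤ ∑' y : Fin n → ℤ, ENNReal.ofReal T * (A y) ^ (1/q) :=
          ENNReal.tsum_le_tsum step2
      _ = ENNReal.ofReal T * ∑' y : Fin n → ℤ, (A y) ^ (1/q) := ENNReal.tsum_mul_left
      _ ≤ ENNReal.ofReal T * ∑' y : Fin n → ℤ,
            (C₁ : ℝ≥0∞) * ∫⁻ x, (bigBall y).indicator h x := by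
          apply mul_le_mul_right
          exact ENNReal.tsum_le_tsum fun y => per_cube_bound hn hu1 h2u hq1 hq2 hK y
      _ = ENNReal.ofReal T * ((C₁ : ℝ≥0∞) * ∑' y : Fin n → ℤ, ∫⁻ x, (bigBall y).indicator h x) := by
          rw [ENNReal.tsum_mul_left]
      _ ≤ ENNReal.ofReal T * ((C₁ : ℝ≥0∞) * (M * ((K : ℝ≥0∞) * L + D))) := by
          apply mul_le_mul_right
          apply mul_le_mul_right
          have hswap : (∑' y : Fin n → ℤ, ∫⁻ x, (bigBall y).indicator h x)
              = ∫⁻ x, ∑' y : Fin n → ℤ, (bigBall y).indicator h x :=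
            (lintegral_tsum (f := fun (y : Fin n → ℤ) (x : EuclideanSpace ℝ (Fin n)) =>
              (bigBall y).indicator h x)
              (fun y => (hmeas_h.indicator measurableSet_closedBall).aemeasurable)).symm
          rw [hswap]
          have hptw : ∀ x, (∑' y : Fin n → ℤ, (bigBall y).indicator h x) ≤ M * h x := by
            intro x
            have : ∀ y : Fin n → ℤ, (bigBall y).indicator h x
                = h x * (bigBall y).indicator (fun _ => (1:ℝ≥0∞)) x := by
              intro y
              by_cases hx : x ∈ bigBall y <;> simp [Set.indicator, hx]
            rw [tsum_congr this, ENNReal.tsum_mul_left]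
            rw [mul_comm]
            exact mul_le_mul_left (counting x) _
          calc (∫⁻ x, ∑' y : Fin n → ℤ, (bigBall y).indicator h x)
              ≤ ∫⁻ x, M * h x := lintegral_mono hptw
            _ = M * ∫⁻ x, h x := lintegral_const_mul' _ _ hMne
            _ = M * ((K : ℝ≥0∞) * L + D) := by
                congr 1
                rw [hh]
                simp only
                rw [lintegral_add_left (hucont.measurable.nnnorm.coe_nnreal_ennreal.const_mul _),
                  lintegral_const_mul' _ _ ENNReal.coe_ne_top]
    -- end calc
  -- convert to real
  have hKLD : (K : ℝ≥0∞) * L + D ≠ ⊤ :=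
    ENNReal.add_ne_top.2 ⟨ENNReal.mul_ne_top ENNReal.coe_ne_top hLne, hDne⟩
  have hRne : ENNReal.ofReal T * ((C₁ : ℝ≥0∞) * (M * ((K : ℝ≥0∞) * L + D))) ≠ ⊤ := by
    apply ENNReal.mul_ne_top ENNReal.ofReal_ne_top
    apply ENNReal.mul_ne_top ENNReal.coe_ne_top
    exact ENNReal.mul_ne_top hMne hKLD
  have hreal : G.toReal ≤ T * ((C₁:ℝ) * (M.toReal * ((K:ℝ) * L.toReal + D.toReal))) := by
    have := ENNReal.toReal_mono hRne main
    rwa [ENNReal.toReal_mul, ENNReal.toReal_mul, ENNReal.toReal_mul,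
      ENNReal.toReal_add (ENNReal.mul_ne_top ENNReal.coe_ne_top hLne) hDne,
      ENNReal.toReal_mul, ENNReal.toReal_ofReal hT0, ENNReal.coe_toReal, ENNReal.coe_toReal]
      at this
  rw [hIg, hIl, hId]
  set l := L.toReal
  set d := D.toReal
  have hl0 : 0 ≤ l := ENNReal.toReal_nonneg
  have hd0 : 0 ≤ d := ENNReal.toReal_nonneg
  have hm0 : 0 ≤ M.toReal := ENNReal.toReal_nonneg
  have hc0 : (0:ℝ) ≤ C₁ := C₁.coe_nonneg
  have hk0 : (0:ℝ) ≤ K := K.coe_nonneg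
  calc G.toReal ≤ T * ((C₁:ℝ) * (M.toReal * ((K:ℝ) * l + d))) := hreal
    _ ≤ T * ((C₁:ℝ) * (M.toReal * (((K:ℝ)+1) * (l + d)))) := by
        apply mul_le_mul_of_nonneg_left _ hT0
        apply mul_le_mul_of_nonneg_left _ hc0
        apply mul_le_mul_of_nonneg_left _ hm0
        nlinarith
    _ ≤ ((C₁:ℝ) * M.toReal * ((K:ℝ)+1) + 1) * (l + d) * T := by
        rw [mul_comm]
        apply mul_le_mul_of_nonneg_right _ hT0
        nlinarith [mul_nonneg hl0 hd0]
end
end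

section
/- Let Ω ⊆ ℝⁿ be a measurable set with 0 < |Ω| < ∞ (Lebesgue measure) and let r ≥ 1. For every u ∈ L^r(Ω) there exists a unique real number m such that ∫_Ω |u(x) − m|^{r−1} (u(x) − m) dx = 0. -/
/-!
Write `φ(t) = |t|^(r-1) t` and `F(m) = ∫ φ(u - m)`. The function `φ` is odd, continuous and
strictly increasing with `|φ(t)| = |t|^r`, so for `u ∈ Lʳ` the integral `F` is finite, strictly
decreasing, and continuous by dominated convergence. The pointwise bound
`φ(a - m) ≤ 2|a|^r - (m/2)^r` for `m ≥ 0` gives `F(m) → -∞` as `m → ∞`, and `F` for `-u`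
is `m ↦ -F(-m)`, so `F(m) → ∞` as `m → -∞`. Hence `F` is a bijection of `ℝ` and has exactly
one zero.
-/

open MeasureTheory Filter

noncomputable def oddRpow (r t : ℝ) : ℝ := |t| ^ (r - 1) * t

section OddRpow

variable {r : ℝ}

lemma oddRpow_neg (r t : ℝ) : oddRpow r (-t) = -oddRpow r t := by
  simp [oddRpow]

lemma oddRpow_of_nonneg (hr : r ≠ 0) {t : ℝ} (ht : 0 ≤ t) : oddRpow r t = t ^ r := by
  rcases ht.eq_or_lt with rfl | ht
  · simp [oddRpow, Real.zero_rpow hr]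
  · rw [oddRpow, abs_of_pos ht, Real.rpow_sub_one ht.ne', div_mul_cancel₀ _ ht.ne']

lemma abs_oddRpow (hr : r ≠ 0) (t : ℝ) : |oddRpow r t| = |t| ^ r := by
  rw [← oddRpow_of_nonneg hr (abs_nonneg t), oddRpow, oddRpow, abs_mul, abs_abs,
    abs_of_nonneg (Real.rpow_nonneg (abs_nonneg t) _)]

lemma oddRpow_eq_max_rpow_sub (hr : r ≠ 0) (t : ℝ) :
    oddRpow r t = max t 0 ^ r - max (-t) 0 ^ r := by
  rcases le_total 0 t with ht | ht
  · rw [oddRpow_of_nonneg hr ht, max_eq_left ht, max_eq_right (neg_nonpos.mpr ht),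
      Real.zero_rpow hr, sub_zero]
  · rw [← neg_neg t, oddRpow_neg, oddRpow_of_nonneg hr (neg_nonneg.mpr ht), neg_neg,
      max_eq_right ht, max_eq_left (neg_nonneg.mpr ht), Real.zero_rpow hr, zero_sub]

lemma continuous_oddRpow (hr : 0 < r) : Continuous (oddRpow r) := by
  rw [funext (oddRpow_eq_max_rpow_sub hr.ne')]
  have := Real.continuous_rpow_const hr.le
  fun_prop

lemma strictMono_oddRpow (hr : 0 < r) : StrictMono (oddRpow r) :=
  strictMono_of_odd_strictMonoOn_nonneg (oddRpow_neg r) fun s hs t ht hst => by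
    rw [oddRpow_of_nonneg hr.ne' hs, oddRpow_of_nonneg hr.ne' ht]
    exact Real.rpow_lt_rpow hs hst hr

lemma oddRpow_sub_le (hr : 0 < r) (a : ℝ) {m : ℝ} (hm : 0 ≤ m) :
    oddRpow r (a - m) ≤ 2 * |a| ^ r - (m / 2) ^ r := by
  have mono := (strictMono_oddRpow hr).monotone
  rcases le_or_gt a (m / 2) with ha | ha
  · calc oddRpow r (a - m) ≤ oddRpow r (-(m / 2)) := mono (by linarith)
      _ = -(m / 2) ^ r := by rw [oddRpow_neg, oddRpow_of_nonneg hr.ne' (by linarith)]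
      _ ≤ _ := by linarith [Real.rpow_nonneg (abs_nonneg a) r]
  · have ha0 : 0 ≤ a := by linarith
    have : (m / 2) ^ r ≤ |a| ^ r :=
      Real.rpow_le_rpow (by linarith) (by rw [abs_of_nonneg ha0]; exact ha.le) hr.le
    calc oddRpow r (a - m) ≤ oddRpow r a := mono (by linarith)
      _ = |a| ^ r := by rw [oddRpow_of_nonneg hr.ne' ha0, abs_of_nonneg ha0]
      _ ≤ _ := by linarith

end OddRpow

section OddMoment

variable {α : Type*} [MeasurableSpace α] {μ : Measure α} {r : ℝ} {u : α → ℝ}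

lemma integral_lt_integral_of_forall_lt [NeZero μ] {f g : α → ℝ} (hf : Integrable f μ)
    (hg : Integrable g μ) (h : ∀ x, f x < g x) : ∫ x, f x ∂μ < ∫ x, g x ∂μ := by
  have hsupp : Function.support (fun x => g x - f x) = Set.univ :=
    Set.eq_univ_of_forall fun x => (sub_pos.mpr (h x)).ne'
  have hpos : 0 < ∫ x, (g x - f x) ∂μ := by
    rw [integral_pos_iff_support_of_nonneg (fun x => (sub_pos.mpr (h x)).le) (hg.sub hf), hsupp]
    exact Measure.measure_univ_pos.mpr (NeZero.ne μ)
  rwa [integral_sub hg hf, sub_pos] at hpos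

lemma MeasureTheory.MemLp.integrable_abs_rpow (hr : 0 < r) {f : α → ℝ}
    (hf : MemLp f (ENNReal.ofReal r) μ) : Integrable (fun x => |f x| ^ r) μ := by
  simpa [ENNReal.toReal_ofReal hr.le] using
    hf.integrable_norm_rpow (by simpa using hr) ENNReal.ofReal_ne_top

lemma MeasureTheory.MemLp.integrable_oddRpow (hr : 0 < r) {f : α → ℝ}
    (hf : MemLp f (ENNReal.ofReal r) μ) : Integrable (fun x => oddRpow r (f x)) μ :=
  (hf.integrable_abs_rpow hr).mono'
    ((continuous_oddRpow hr).comp_aestronglyMeasurable hf.1)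
    (Eventually.of_forall fun x => (abs_oddRpow hr.ne' (f x)).le)

noncomputable def oddMoment (μ : Measure α) (r : ℝ) (u : α → ℝ) (m : ℝ) : ℝ :=
  ∫ x, oddRpow r (u x - m) ∂μ

lemma oddMoment_neg (u : α → ℝ) (m : ℝ) : oddMoment μ r (-u) m = -oddMoment μ r u (-m) := by
  simp only [oddMoment, Pi.neg_apply, ← integral_neg, ← oddRpow_neg]
  congr with x
  ring_nf

variable [IsFiniteMeasure μ]

lemma integrable_oddRpow_sub (hr : 0 < r) (hu : MemLp u (ENNReal.ofReal r) μ) (c : ℝ) :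
    Integrable (fun x => oddRpow r (u x - c)) μ :=
  (hu.sub (memLp_const c)).integrable_oddRpow hr

lemma strictAnti_oddMoment [NeZero μ] (hr : 0 < r) (hu : MemLp u (ENNReal.ofReal r) μ) :
    StrictAnti (oddMoment μ r u) := fun m m' hmm' =>
  integral_lt_integral_of_forall_lt (integrable_oddRpow_sub hr hu m')
    (integrable_oddRpow_sub hr hu m) fun x => strictMono_oddRpow hr (by linarith)

lemma continuous_oddMoment (hr : 0 < r) (hu : MemLp u (ENNReal.ofReal r) μ) :
    Continuous (oddMoment μ r u) := by
  rw [continuous_iff_continuousAt]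
  intro m₀
  -- on `(m₀ - 1, m₀ + 1)` the integrand is squeezed between its values at the endpoints
  set lo := fun x => oddRpow r (u x - (m₀ + 1))
  set hi := fun x => oddRpow r (u x - (m₀ - 1))
  refine continuousAt_of_dominated (bound := fun x => max |lo x| |hi x|)
    (Eventually.of_forall fun m => (integrable_oddRpow_sub hr hu m).1) ?_
    ((integrable_oddRpow_sub hr hu _).abs.sup (integrable_oddRpow_sub hr hu _).abs)
    (Eventually.of_forall fun x =>
      ((continuous_oddRpow hr).comp (continuous_const.sub continuous_id)).continuousAt)
  filter_upwards [Ioo_mem_nhds (sub_one_lt m₀) (lt_add_one m₀)] with m hm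
  refine Eventually.of_forall fun x => abs_le_max_abs_abs ?_ ?_
  · exact (strictMono_oddRpow hr).monotone (by linarith [hm.2])
  · exact (strictMono_oddRpow hr).monotone (by linarith [hm.1])

lemma tendsto_oddMoment_atTop [NeZero μ] (hr : 0 < r) (hu : MemLp u (ENNReal.ofReal r) μ) :
    Tendsto (oddMoment μ r u) atTop atBot := by
  set C := ∫ x, 2 * |u x| ^ r ∂μ
  set V := μ.real Set.univ
  have hI : Integrable (fun x => 2 * |u x| ^ r) μ := (hu.integrable_abs_rpow hr).const_mul 2
  have hbound : ∀ m ≥ 0, oddMoment μ r u m ≤ C - V * (m / 2) ^ r := fun m hm =>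
    calc oddMoment μ r u m ≤ ∫ x, (2 * |u x| ^ r - (m / 2) ^ r) ∂μ :=
          integral_mono (integrable_oddRpow_sub hr hu m) (hI.sub (integrable_const _))
            fun x => oddRpow_sub_le hr (u x) hm
      _ = C - V * (m / 2) ^ r := by
        rw [integral_sub hI (integrable_const _), integral_const, smul_eq_mul]
  have hV : 0 < V := ENNReal.toReal_pos (NeZero.ne _) (measure_ne_top μ _)
  have hlim : Tendsto (fun m : ℝ => C - V * (m / 2) ^ r) atTop atBot := by
    simpa only [sub_eq_add_neg, Function.comp_def, id] using tendsto_atBot_add_const_left _ C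
      (tendsto_neg_atTop_atBot.comp
        (((tendsto_rpow_atTop hr).comp (tendsto_id.atTop_div_const two_pos)).const_mul_atTop hV))
  exact tendsto_atBot_mono' _ ((eventually_ge_atTop 0).mono hbound) hlim

lemma tendsto_oddMoment_atBot [NeZero μ] (hr : 0 < r) (hu : MemLp u (ENNReal.ofReal r) μ) :
    Tendsto (oddMoment μ r u) atBot atTop := by
  have := (tendsto_oddMoment_atTop hr hu.neg).comp tendsto_neg_atBot_atTop
  simpa only [Function.comp_def, oddMoment_neg, neg_neg, tendsto_neg_atBot_iff] using this

lemma bijective_oddMoment [NeZero μ] (hr : 0 < r) (hu : MemLp u (ENNReal.ofReal r) μ) :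
    Function.Bijective (oddMoment μ r u) :=
  ⟨(strictAnti_oddMoment hr hu).injective,
    (continuous_oddMoment hr hu).surjective' (tendsto_oddMoment_atBot hr hu)
      (tendsto_oddMoment_atTop hr hu)⟩

end OddMoment

theorem exists_unique_generalized_median_general {n : ℕ}
    (Ω : Set (EuclideanSpace ℝ (Fin n)))
    (hΩpos : 0 < volume Ω) (hΩfin : volume Ω < ⊤)
    (r : ℝ) (hr : 1 ≤ r) (u : EuclideanSpace ℝ (Fin n) → ℝ)
    (hu : MemLp u (ENNReal.ofReal r) (volume.restrict Ω)) :
    ∃! m : ℝ, ∫ x in Ω, |u x - m| ^ (r - 1) * (u x - m) = 0 := by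
  have : IsFiniteMeasure (volume.restrict Ω) := ⟨by rwa [Measure.restrict_apply_univ]⟩
  have : NeZero (volume.restrict Ω) := ⟨by simpa [Measure.restrict_eq_zero] using hΩpos.ne'⟩
  exact (bijective_oddMoment (by linarith) hu).existsUnique 0

/-- for u ∈ L^r(Ω) on a set of finite positive measure there is a unique real
number m with ∫_Ω |u − m|^{r−1}(u − m) dx = 0 (the powers are real powers, with 0^0 = 1, so
that for r = 1 the condition reads ∫_Ω (u − m) dx = 0). -/
theorem exists_unique_generalized_median {n : ℕ}
    (Ω : Set (EuclideanSpace ℝ (Fin n))) (hΩm : MeasurableSet Ω)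
    (hΩpos : 0 < volume Ω) (hΩfin : volume Ω < ⊤)
    (r : ℝ) (hr : 1 ≤ r) (u : EuclideanSpace ℝ (Fin n) → ℝ)
    (hu : MemLp u (ENNReal.ofReal r) (volume.restrict Ω)) :
    ∃! m : ℝ, ∫ x in Ω, |u x - m| ^ (r - 1) * (u x - m) = 0 :=
  exists_unique_generalized_median_general Ω hΩpos hΩfin r hr u hu
end

section
/- Let n ≥ 2, let Ω ⊂ ℝⁿ be a nonempty bounded open set, and let 1 ≤ q ≤ n/(n−1). Then there is no constant A > 0 such that A ‖u − u_Ω‖_{L^q(Ω)} ≤ E_Ω(u) for all smooth functions u : Ω → ℝ with ∫_Ω |∇u| dx < ∞ and u ∈ L^q(Ω); indeed, there exists such a function u (for example a non-constant affine function) that is not almost everywhere equal to a constant and satisfies E_Ω(u) = 0. -/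
open MeasureTheory ENNReal

noncomputable section

/-- Ψ_ξ(u) = ∫_Ω |∇u(x)·ξ| dx for a function u defined (C¹) on the open set Ω. -/
def PsiOn {n : ℕ} (Ω : Set (EuclideanSpace ℝ (Fin n))) (u : EuclideanSpace ℝ (Fin n) → ℝ)
    (ξ : EuclideanSpace ℝ (Fin n)) : ℝ≥0∞ :=
  ∫⁻ x in Ω, ENNReal.ofReal |fderivWithin ℝ u Ω x ξ|

/-- The affine energy E_Ω(u) = α_n (∫_{S^{n-1}} Ψ_ξ(u)^{-n} dξ)^{-1/n}, computed in the
extended nonnegative reals (so that 0^{-n} = ∞ and ∞^{-1/n} = 0, matching the conventions). -/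
def energyOn {n : ℕ} (Ω : Set (EuclideanSpace ℝ (Fin n)))
    (u : EuclideanSpace ℝ (Fin n) → ℝ) : ℝ≥0∞ :=
  ENNReal.ofReal (alphaConst n) *
    (∫⁻ ξ, (PsiOn Ω u ξ) ^ (-(n : ℝ)) ∂(sphereMeasure n)) ^ (-(1 / (n : ℝ)))

/-- The average of u over Ω. -/
def average' {n : ℕ} (Ω : Set (EuclideanSpace ℝ (Fin n))) (u : EuclideanSpace ℝ (Fin n) → ℝ) : ℝ :=
  (volume Ω).toReal⁻¹ * ∫ x in Ω, u x

-- auxiliary lemmas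
lemma abs_coord_le_norm {k : ℕ} (x : EuclideanSpace ℝ (Fin k)) (i : Fin k) : |x i| ≤ ‖x‖ := by
  rw [EuclideanSpace.norm_eq, ← Real.sqrt_sq_eq_abs]
  apply Real.sqrt_le_sqrt
  have := Finset.single_le_sum (f := fun j => ‖x j‖ ^ 2) (fun j _ => sq_nonneg _)
    (Finset.mem_univ i)
  simpa [Real.norm_eq_abs, sq_abs] using this

lemma lip_drop_last {m : ℕ} :
    LipschitzWith 1 (fun (x : EuclideanSpace ℝ (Fin (m + 2))) (i : Fin (m + 1)) =>
      x i.castSucc) := by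
  refine LipschitzWith.of_dist_le_mul fun x y => ?_
  rw [NNReal.coe_one, one_mul, dist_pi_le_iff dist_nonneg]
  intro i
  rw [Real.dist_eq, dist_eq_norm]
  have h1 : x i.castSucc - y i.castSucc = (x - y) i.castSucc := by simp
  rw [h1]
  exact abs_coord_le_norm (x - y) i.castSucc

lemma cube_subset_image {m : ℕ} {ε : ℝ} (hε0 : 0 < ε) (hε1 : ε ≤ 1 / (m + 1)) :
    (Set.univ.pi fun _ : Fin (m + 1) => Set.Icc (0:ℝ) ε) ⊆
      (fun (x : EuclideanSpace ℝ (Fin (m + 2))) (i : Fin (m + 1)) => x i.castSucc) ''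
        ({ξ : EuclideanSpace ℝ (Fin (m + 2)) | ξ 0 ∈ Set.Icc 0 ε} ∩
          Metric.sphere (0 : EuclideanSpace ℝ (Fin (m + 2))) 1) := by
  intro y hy
  simp only [Set.mem_pi, Set.mem_univ, forall_true_left, Set.mem_Icc] at hy
  set s : ℝ := ∑ i : Fin (m + 1), (y i) ^ 2 with hs
  have hs0 : 0 ≤ s := Finset.sum_nonneg fun i _ => sq_nonneg _
  have hcard : ((m : ℝ) + 1) * ε ≤ 1 := by
    rw [div_eq_inv_mul, ← inv_mul_le_iff₀ (by positivity), inv_inv] at hε1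
    linarith [hε1]
  have hs1 : s ≤ 1 := by
    have h1 : s ≤ ∑ _i : Fin (m + 1), ε ^ 2 := by
      apply Finset.sum_le_sum
      intro i _
      have := (hy i).1
      have := (hy i).2
      nlinarith
    have h2 : (∑ _i : Fin (m + 1), ε ^ 2) = ((m : ℝ) + 1) * ε ^ 2 := by
      simp [Finset.sum_const, Finset.card_univ]
    nlinarith
  set ξ : EuclideanSpace ℝ (Fin (m + 2)) :=
    (WithLp.equiv 2 (Fin (m + 2) → ℝ)).symm (Fin.snoc y (Real.sqrt (1 - s))) with hξ
  have hξc : ∀ j : Fin (m + 2), ξ j = (Fin.snoc y (Real.sqrt (1 - s)) : Fin (m + 2) → ℝ) j := by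
    intro j; rw [hξ]; rfl
  have hcoord : ∀ i : Fin (m + 1), ξ i.castSucc = y i := by
    intro i; rw [hξc]; exact Fin.snoc_castSucc _ _ _
  refine ⟨ξ, ⟨?_, ?_⟩, ?_⟩
  · show ξ 0 ∈ Set.Icc 0 ε
    have h0 : (0 : Fin (m + 2)) = Fin.castSucc (0 : Fin (m + 1)) := by simp
    rw [h0, hcoord]
    exact ⟨(hy 0).1, (hy 0).2⟩
  · rw [mem_sphere_zero_iff_norm, EuclideanSpace.norm_eq]
    have hsum : (∑ j : Fin (m + 2), ‖ξ j‖ ^ 2) = 1 := by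
      rw [Fin.sum_univ_castSucc]
      have hlast : ξ (Fin.last (m + 1)) = Real.sqrt (1 - s) := by
        rw [hξc]; exact Fin.snoc_last _ _
      have : (∑ i : Fin (m + 1), ‖ξ i.castSucc‖ ^ 2) = s := by
        rw [hs]
        apply Finset.sum_congr rfl
        intro i _
        rw [hcoord, Real.norm_eq_abs, sq_abs]
      rw [this, hlast, Real.norm_eq_abs, sq_abs, Real.sq_sqrt (by linarith)]
      ring
    rw [hsum, Real.sqrt_one]
  · funext i
    exact hcoord i

lemma sphere_band_measure {m : ℕ} {ε : ℝ} (hε0 : 0 < ε) (hε1 : ε ≤ 1 / (m + 1)) :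
    ENNReal.ofReal ε ^ (m + 1) ≤
      sphereMeasure (m + 2) {ξ : EuclideanSpace ℝ (Fin (m + 2)) | ξ 0 ∈ Set.Icc 0 ε} := by
  set B : Set (EuclideanSpace ℝ (Fin (m + 2))) := {ξ | ξ 0 ∈ Set.Icc 0 ε} with hB
  set S := Metric.sphere (0 : EuclideanSpace ℝ (Fin (m + 2))) 1
  have hcont : Continuous fun ξ : EuclideanSpace ℝ (Fin (m + 2)) => ξ 0 :=
    (EuclideanSpace.proj (0 : Fin (m + 2))).continuous
  have hBm : MeasurableSet B := (isClosed_Icc.preimage hcont).measurableSet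
  have hd : ((m + 2 : ℕ) : ℝ) - 1 = ((m + 1 : ℕ) : ℝ) := by push_cast; ring
  rw [sphereMeasure, Measure.restrict_apply hBm, hd]
  set g := fun (x : EuclideanSpace ℝ (Fin (m + 2))) (i : Fin (m + 1)) => x i.castSucc
  have himg := (lip_drop_last (m := m)).hausdorffMeasure_image_le
    (d := ((m + 1 : ℕ) : ℝ)) (by positivity) (B ∩ S)
  simp only [ENNReal.coe_one, ENNReal.one_rpow, one_mul] at himg
  refine le_trans ?_ himg
  have hcube := cube_subset_image hε0 hε1
  calc ENNReal.ofReal ε ^ (m + 1)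
      = volume (Set.univ.pi fun _ : Fin (m + 1) => Set.Icc (0:ℝ) ε) := by
        rw [volume_pi_pi]
        simp [Real.volume_Icc]
    _ = μH[((m + 1 : ℕ) : ℝ)] (Set.univ.pi fun _ : Fin (m + 1) => Set.Icc (0:ℝ) ε) := by
        rw [← hausdorffMeasure_pi_real (ι := Fin (m + 1))]
        simp
    _ ≤ μH[((m + 1 : ℕ) : ℝ)] (g '' (B ∩ S)) := measure_mono hcube

/-- no affine Poincaré–Wirtinger inequality with the local affine energy can
hold on a nonempty bounded open set Ω: there is no A > 0 with
A‖u − u_Ω‖_{L^q(Ω)} ≤ E_Ω(u) for all admissible u; indeed some admissible u which is not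
a.e. equal to a constant on Ω has E_Ω(u) = 0. -/
theorem no_affine_poincare_wirtinger {n : ℕ} (hn : 2 ≤ n)
    (Ω : Set (EuclideanSpace ℝ (Fin n))) (hΩo : IsOpen Ω) (hΩne : Ω.Nonempty)
    (hΩb : Bornology.IsBounded Ω)
    (q : ℝ) (hq1 : 1 ≤ q) (hq2 : q ≤ (n : ℝ) / ((n : ℝ) - 1)) :
    (¬ ∃ A > (0 : ℝ), ∀ u : EuclideanSpace ℝ (Fin n) → ℝ,
        ContDiffOn ℝ (⊤ : ℕ∞) u Ω →
        (∫⁻ x in Ω, ENNReal.ofReal ‖fderivWithin ℝ u Ω x‖) < ⊤ →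
        MemLp u (ENNReal.ofReal q) (volume.restrict Ω) →
        ENNReal.ofReal (A * (∫ x in Ω, |u x - average' Ω u| ^ q) ^ (1 / q)) ≤ energyOn Ω u) ∧
    ∃ u : EuclideanSpace ℝ (Fin n) → ℝ,
      ContDiffOn ℝ (⊤ : ℕ∞) u Ω ∧
      (∫⁻ x in Ω, ENNReal.ofReal ‖fderivWithin ℝ u Ω x‖) < ⊤ ∧
      MemLp u (ENNReal.ofReal q) (volume.restrict Ω) ∧
      (¬ ∃ c : ℝ, ∀ᵐ x ∂(volume.restrict Ω), u x = c) ∧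
      energyOn Ω u = 0 := by
  obtain ⟨m, rfl⟩ : ∃ m, n = m + 2 := ⟨n - 2, by omega⟩
  set L : EuclideanSpace ℝ (Fin (m + 2)) →L[ℝ] ℝ := EuclideanSpace.proj (0 : Fin (m + 2))
    with hL
  set u : EuclideanSpace ℝ (Fin (m + 2)) → ℝ := fun x => L x with hu
  have hmΩ : MeasurableSet Ω := hΩo.measurableSet
  have hVfin : volume Ω < ⊤ := hΩb.measure_lt_top
  have hVne : volume Ω ≠ ⊤ := hVfin.ne
  have hVpos : 0 < volume Ω := hΩo.measure_pos volume hΩne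
  have hVne0 : volume Ω ≠ 0 := hVpos.ne'
  have hfd : ∀ x ∈ Ω, fderivWithin ℝ u Ω x = L := fun x hx =>
    (L.hasFDerivAt.hasFDerivWithinAt).fderivWithin (hΩo.uniqueDiffWithinAt hx)
  have hsmooth : ContDiffOn ℝ (⊤ : ℕ∞) u Ω := L.contDiff.contDiffOn
  have hgrad : (∫⁻ x in Ω, ENNReal.ofReal ‖fderivWithin ℝ u Ω x‖) < ⊤ := by
    have heq : (∫⁻ x in Ω, ENNReal.ofReal ‖fderivWithin ℝ u Ω x‖) =
        ENNReal.ofReal ‖L‖ * volume Ω := by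
      rw [setLIntegral_congr_fun hmΩ (fun x hx => by rw [hfd x hx]),
        setLIntegral_const]
    rw [heq]
    exact ENNReal.mul_lt_top ENNReal.ofReal_lt_top hVfin
  obtain ⟨R, hR⟩ := (Metric.isBounded_iff_subset_closedBall 0).1 hΩb
  haveI : IsFiniteMeasure (volume.restrict Ω) := ⟨by rwa [Measure.restrict_apply_univ]⟩
  have hRge : 0 ≤ R := by
    obtain ⟨x₀, hx₀⟩ := hΩne
    have := hR hx₀
    simp only [Metric.mem_closedBall, dist_zero_right] at this
    exact le_trans (norm_nonneg _) this
  have hnormx : ∀ x ∈ Ω, ‖x‖ ≤ R := by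
    intro x hx
    have := hR hx
    simpa only [Metric.mem_closedBall, dist_zero_right] using this
  have hbound : ∀ x ∈ Ω, ‖u x‖ ≤ R := by
    intro x hx
    calc ‖u x‖ = |x 0| := by simp [hu, hL, Real.norm_eq_abs]
      _ ≤ ‖x‖ := abs_coord_le_norm x 0
      _ ≤ R := hnormx x hx
  have hmem : MemLp u (ENNReal.ofReal q) (volume.restrict Ω) :=
    MemLp.of_bound (L.continuous.aestronglyMeasurable) R
      ((ae_restrict_iff' hmΩ).2 (ae_of_all _ hbound))
  have key : ∀ c : ℝ, 0 < volume (Ω ∩ {x | u x ≠ c}) := by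
    intro c
    have hopen : IsOpen (Ω ∩ {x | u x ≠ c}) :=
      hΩo.inter (isOpen_ne_fun L.continuous continuous_const)
    obtain ⟨x₀, hx₀⟩ := hΩne
    obtain ⟨r, hr, hball⟩ := Metric.isOpen_iff.1 hΩo x₀ hx₀
    set t : ℝ := if x₀ 0 + r / 2 = c then -(r / 2) else r / 2 with ht
    have habs : |t| = r / 2 := by
      rw [ht]; split
      · rw [abs_neg, abs_of_nonneg (by linarith)]
      · rw [abs_of_nonneg (by linarith)]
    set y : EuclideanSpace ℝ (Fin (m + 2)) := x₀ + EuclideanSpace.single 0 t with hy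
    have hy0 : y 0 = x₀ 0 + t := by simp [hy, EuclideanSpace.single_apply]
    have hyΩ : y ∈ Ω := by
      apply hball
      rw [Metric.mem_ball, dist_eq_norm]
      have hsub : y - x₀ = EuclideanSpace.single 0 t := by rw [hy]; abel
      rw [hsub, EuclideanSpace.norm_single, Real.norm_eq_abs, habs]
      linarith
    have hyc : u y ≠ c := by
      have huy : u y = x₀ 0 + t := by
        rw [show u y = y 0 by simp [hu, hL], hy0]
      rw [huy, ht]
      by_cases h : x₀ 0 + r / 2 = c
      · rw [if_pos h]; intro hcon; linarith
      · rw [if_neg h]; exact h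
    exact hopen.measure_pos volume ⟨y, hyΩ, hyc⟩
  have hPsi : ∀ ξ, PsiOn Ω u ξ = ENNReal.ofReal |ξ 0| * volume Ω := by
    intro ξ
    have hptw : ∀ x ∈ Ω, ENNReal.ofReal |fderivWithin ℝ u Ω x ξ| = ENNReal.ofReal |ξ 0| := by
      intro x hx; rw [hfd x hx, hL]; simp
    rw [PsiOn, setLIntegral_congr_fun hmΩ hptw, setLIntegral_const]
  have hInt : (∫⁻ ξ, (PsiOn Ω u ξ) ^ (-((m + 2 : ℕ) : ℝ)) ∂(sphereMeasure (m + 2))) = ⊤ := by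
    apply ENNReal.eq_top_of_forall_nnreal_le
    intro M
    set c : ℝ≥0∞ := (volume Ω) ^ (-((m + 2 : ℕ) : ℝ)) with hc
    have hc0 : c ≠ 0 := by
      rw [hc]
      simp [ENNReal.rpow_eq_zero_iff, hVne0, hVne]
    have hcT : c ≠ ⊤ := by
      rw [hc]
      simp [ENNReal.rpow_eq_top_iff, hVne0, hVne]
    set t : ℝ := ((M : ℝ≥0∞) * c⁻¹).toReal with htdef
    have ht0 : 0 ≤ t := ENNReal.toReal_nonneg
    set ε : ℝ := min (1 / (m + 1 : ℝ)) (1 / (t + 1)) with hε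
    have hε0 : 0 < ε := lt_min (by positivity) (by positivity)
    have hε1 : ε ≤ 1 / (m + 1 : ℝ) := min_le_left _ _
    have hεne0 : ENNReal.ofReal ε ≠ 0 := (ENNReal.ofReal_pos.2 hε0).ne'
    set B : Set (EuclideanSpace ℝ (Fin (m + 2))) := {ξ | ξ 0 ∈ Set.Icc 0 ε} with hBdef
    have hcont : Continuous fun ξ : EuclideanSpace ℝ (Fin (m + 2)) => ξ 0 :=
      (EuclideanSpace.proj (0 : Fin (m + 2))).continuous
    have hBm : MeasurableSet B := (isClosed_Icc.preimage hcont).measurableSet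
    have hμB : ENNReal.ofReal ε ^ (m + 1) ≤ sphereMeasure (m + 2) B :=
      sphere_band_measure hε0 hε1
    have hstepA : (M : ℝ≥0∞) ≤ (ENNReal.ofReal ε)⁻¹ * c := by
      have h1 : ENNReal.ofReal ε ≤ ENNReal.ofReal (1 / (t + 1)) :=
        ENNReal.ofReal_le_ofReal (min_le_right _ _)
      have h2 : ENNReal.ofReal (1 / (t + 1)) = (ENNReal.ofReal (t + 1))⁻¹ := by
        rw [one_div, ENNReal.ofReal_inv_of_pos (by linarith)]
      have h3 : ENNReal.ofReal (t + 1) ≤ (ENNReal.ofReal ε)⁻¹ := by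
        exact ENNReal.le_inv_iff_le_inv.1 (h2 ▸ h1)
      have h4 : (M : ℝ≥0∞) * c⁻¹ ≤ ENNReal.ofReal (t + 1) := by
        have hfin : (M : ℝ≥0∞) * c⁻¹ ≠ ⊤ :=
          ENNReal.mul_ne_top ENNReal.coe_ne_top (ENNReal.inv_ne_top.2 hc0)
        rw [← ENNReal.ofReal_toReal hfin, ← htdef]
        exact ENNReal.ofReal_le_ofReal (by linarith)
      calc (M : ℝ≥0∞) = (M : ℝ≥0∞) * c⁻¹ * c := by
            rw [mul_assoc, ENNReal.inv_mul_cancel hc0 hcT, mul_one]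
        _ ≤ ENNReal.ofReal (t + 1) * c := mul_le_mul_left h4 c
        _ ≤ (ENNReal.ofReal ε)⁻¹ * c := mul_le_mul_left h3 c
    have hstepB : (ENNReal.ofReal ε * volume Ω) ^ (-((m + 2 : ℕ) : ℝ)) *
        ENNReal.ofReal ε ^ (m + 1) = (ENNReal.ofReal ε)⁻¹ * c := by
      rw [ENNReal.mul_rpow_of_ne_zero hεne0 hVne0,
        ← ENNReal.rpow_natCast (ENNReal.ofReal ε) (m + 1), hc,
        mul_right_comm, ← ENNReal.rpow_add _ _ hεne0 ENNReal.ofReal_ne_top,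
        show -((m + 2 : ℕ) : ℝ) + ((m + 1 : ℕ) : ℝ) = -1 by push_cast; ring,
        ENNReal.rpow_neg_one]
    have hΨle : ∀ ξ ∈ B, (ENNReal.ofReal ε * volume Ω) ^ (-((m + 2 : ℕ) : ℝ)) ≤
        (PsiOn Ω u ξ) ^ (-((m + 2 : ℕ) : ℝ)) := by
      intro ξ hξ
      obtain ⟨h1, h2⟩ := hξ
      have hψ : PsiOn Ω u ξ ≤ ENNReal.ofReal ε * volume Ω := by
        rw [hPsi ξ]
        exact mul_le_mul_left
          (ENNReal.ofReal_le_ofReal (by rw [abs_of_nonneg h1]; exact h2)) _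
      rw [ENNReal.rpow_neg, ENNReal.rpow_neg]
      exact ENNReal.inv_le_inv.2 (ENNReal.rpow_le_rpow hψ (by positivity))
    calc (M : ℝ≥0∞) ≤ (ENNReal.ofReal ε)⁻¹ * c := hstepA
      _ = (ENNReal.ofReal ε * volume Ω) ^ (-((m + 2 : ℕ) : ℝ)) * ENNReal.ofReal ε ^ (m + 1) :=
          hstepB.symm
      _ ≤ (ENNReal.ofReal ε * volume Ω) ^ (-((m + 2 : ℕ) : ℝ)) * sphereMeasure (m + 2) B :=
          mul_le_mul_right hμB _
      _ = ∫⁻ _ξ in B, (ENNReal.ofReal ε * volume Ω) ^ (-((m + 2 : ℕ) : ℝ))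
            ∂(sphereMeasure (m + 2)) := by rw [setLIntegral_const]
      _ ≤ ∫⁻ ξ in B, (PsiOn Ω u ξ) ^ (-((m + 2 : ℕ) : ℝ)) ∂(sphereMeasure (m + 2)) := by
          refine lintegral_mono_ae ?_
          exact (ae_restrict_iff' hBm).2 (ae_of_all _ hΨle)
      _ ≤ _ := setLIntegral_le_lintegral _ _
  have hE : energyOn Ω u = 0 := by
    rw [energyOn, hInt, ENNReal.top_rpow_of_neg, mul_zero]
    have h01 : (0 : ℝ) < 1 / ((m + 2 : ℕ) : ℝ) := by positivity
    linarith
  have hnotconst : ¬ ∃ c : ℝ, ∀ᵐ x ∂(volume.restrict Ω), u x = c := by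
    rintro ⟨c, hc⟩
    have h0 : volume.restrict Ω {x | ¬ u x = c} = 0 := ae_iff.1 hc
    have hms : MeasurableSet {x | ¬ u x = c} :=
      (isOpen_ne_fun L.continuous continuous_const).measurableSet
    rw [Measure.restrict_apply hms] at h0
    have hpos := key c
    rw [Set.inter_comm] at hpos
    exact absurd h0 hpos.ne'
  refine ⟨?_, ⟨u, hsmooth, hgrad, hmem, hnotconst, hE⟩⟩
  rintro ⟨A, hA, h⟩
  have hle := h u hsmooth hgrad hmem
  rw [hE, le_zero_iff, ENNReal.ofReal_eq_zero] at hle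
  set c0 := average' Ω u with hc0
  have hqpos : 0 < q := lt_of_lt_of_le one_pos hq1
  have hcontf : Continuous fun x : EuclideanSpace ℝ (Fin (m + 2)) => |u x - c0| ^ q := by
    apply Continuous.rpow_const
    · exact (L.continuous.sub continuous_const).abs
    · intro x; exact Or.inr (le_of_lt hqpos)
  have hint : IntegrableOn (fun x => |u x - c0| ^ q) Ω volume := by
    refine memLp_one_iff_integrable.1 ?_
    refine MemLp.of_bound hcontf.aestronglyMeasurable ((R + |c0|) ^ q) ?_
    refine (ae_restrict_iff' hmΩ).2 (ae_of_all _ fun x hx => ?_)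
    have h2 : |u x - c0| ≤ R + |c0| := by
      have h3 := abs_coord_le_norm x 0
      have hux : |u x| = |x 0| := by simp [hu, hL]
      have h4 := hnormx x hx
      calc |u x - c0| ≤ |u x| + |c0| := abs_sub _ _
        _ ≤ R + |c0| := by rw [hux]; linarith
    have h5 : ‖|u x - c0| ^ q‖ = |u x - c0| ^ q :=
      Real.norm_of_nonneg (Real.rpow_nonneg (abs_nonneg _) q)
    rw [h5]
    exact Real.rpow_le_rpow (abs_nonneg _) h2 (le_of_lt hqpos)
  have hpos : 0 < ∫ x in Ω, |u x - c0| ^ q := by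
    rw [setIntegral_pos_iff_support_of_nonneg_ae
      (ae_of_all _ fun x => Real.rpow_nonneg (abs_nonneg _) q) hint]
    refine lt_of_lt_of_le (key c0) (measure_mono ?_)
    rintro x ⟨hxΩ, hxne⟩
    refine ⟨?_, hxΩ⟩
    simp only [Function.mem_support]
    have habs : 0 < |u x - c0| := abs_pos.2 (sub_ne_zero.2 hxne)
    exact (Real.rpow_pos_of_pos habs q).ne'
  have hfinal : 0 < A * (∫ x in Ω, |u x - c0| ^ q) ^ (1 / q) :=
    mul_pos hA (Real.rpow_pos_of_pos hpos _)
  linarith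
end
end
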